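/- arXiv:0707.2306 — 3 statements merged into one kernel-verified Lean document; each statement's English description precedes it below -/
import Mathlib

section
/- Let G be a finite simple graph with vertex set V and edge set E, let k(G) be its number of connected components, and let ω = e^{2πi/3}. Then 2^{|V| − k(G)} · ∑ ω^{|A| − |B|}, summed over all ordered pairs (A,B) of eulerian subsets of E with A ∪ B = E, equals 2^{|E| − |V| + k(G)} · ∑ ω^{|A| − |B|}, summed over all ordered pairs (A,B) of cutsets of G with A ∪ B = E. -/
open Finset
open scoped symmDiff
set_option linter.unusedSectionVars false
set_option maxHeartbeats 1000000


/-- A finite set `A` of potential edges (unordered pairs) is eulerian if every vertex is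
incident with an even number of its elements. -/
def IsEul {V : Type*} (A : Finset (Sym2 V)) : Prop :=
  ∀ v : V, Even (Nat.card {e : Sym2 V // e ∈ A ∧ v ∈ e})

/-- `A` is a cutset of `G`: for some set `S` of vertices, `A` is the set of edges of `G`
with exactly one endpoint in `S`. -/
def IsCutset {V : Type*} (G : SimpleGraph V) (A : Finset (Sym2 V)) : Prop :=
  ∃ S : Finset V, ∀ e : Sym2 V,
    e ∈ A ↔ e ∈ G.edgeSet ∧
      ∃ u v : V, e = s(u, v) ∧ ((u ∈ S ∧ v ∉ S) ∨ (v ∈ S ∧ u ∉ S))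

/- With `ω = exp(2πi/3)`:
`2^{|V| − k(G)} ∑_{(A,B) eulerian, A ∪ B = E} ω^{|A|−|B|}
  = 2^{|E| − |V| + k(G)} ∑_{(A,B) cutsets, A ∪ B = E} ω^{|A|−|B|}`. -/

noncomputable def om : ℂ := Complex.exp (2 * Real.pi * Complex.I / 3)

lemma om_ne_zero : om ≠ 0 := Complex.exp_ne_zero _

lemma om_pow_three : om ^ 3 = 1 := by
  rw [om, ← Complex.exp_nat_mul]
  have : ((3 : ℕ) : ℂ) * (2 * Real.pi * Complex.I / 3) = 2 * Real.pi * Complex.I := by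
    push_cast; ring
  rw [this, Complex.exp_two_pi_mul_I]

lemma om_ne_one : om ≠ 1 := by
  intro h
  rw [om, Complex.exp_eq_one_iff] at h
  obtain ⟨n, hn⟩ := h
  have h3 : ((3 * n : ℤ) : ℂ) = 1 := by
    have hpi : (Real.pi : ℂ) ≠ 0 := by simpa using Real.pi_ne_zero
    have h2 : (((3 * n : ℤ) : ℂ) - 1) * (2 * (Real.pi : ℂ) * Complex.I) = 0 := by
      push_cast
      linear_combination (-3 : ℂ) * hn
    rcases mul_eq_zero.mp h2 with h | h
    · linear_combination h
    · exact absurd h (by simp [hpi, Complex.I_ne_zero])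
  have : (3 * n : ℤ) = 1 := by exact_mod_cast h3
  omega

lemma om_sum : 1 + om + om ^ 2 = 0 := by
  have h : (om - 1) * (1 + om + om ^ 2) = 0 := by linear_combination om_pow_three
  rcases mul_eq_zero.mp h with h | h
  · exact absurd (by linear_combination h) om_ne_one
  · exact h

lemma om_mul_sq : om * om ^ 2 = 1 := by linear_combination om_pow_three

section Graph
variable {V : Type*} [Fintype V] [DecidableEq V] (G : SimpleGraph V) [DecidableRel G.Adj]

/-- crossing indicator of an unordered pair w.r.t. a vertex set -/
def crossB (S : Finset V) : Sym2 V → Bool :=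
  Sym2.lift ⟨fun u v => (decide (u ∈ S)).xor (decide (v ∈ S)), by
    intro u v; simp [Bool.xor_comm]⟩

lemma crossB_mk (S : Finset V) (u v : V) :
    crossB S s(u, v) = (decide (u ∈ S)).xor (decide (v ∈ S)) := rfl

/-- the cutset associated to a vertex set -/
def cutF (S : Finset V) : Finset (Sym2 V) :=
  G.edgeFinset.filter (fun e => crossB S e = true)

lemma mem_cutF {S : Finset V} {e : Sym2 V} :
    e ∈ cutF G S ↔ e ∈ G.edgeFinset ∧ crossB S e = true := Finset.mem_filter

lemma cutF_subset (S : Finset V) : cutF G S ⊆ G.edgeFinset := Finset.filter_subset _ _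

lemma isCutset_iff {A : Finset (Sym2 V)} : IsCutset G A ↔ ∃ S : Finset V, A = cutF G S := by
  constructor
  · rintro ⟨S, hS⟩
    refine ⟨S, ?_⟩
    ext e
    rw [hS e, mem_cutF, SimpleGraph.mem_edgeFinset]
    constructor
    · rintro ⟨he, u, v, rfl, h⟩
      refine ⟨he, ?_⟩
      rw [crossB_mk]
      rcases h with ⟨h1, h2⟩ | ⟨h1, h2⟩ <;> simp [h1, h2]
    · rintro ⟨he, hc⟩
      refine ⟨he, ?_⟩
      induction e with
      | _ u v =>
        rw [crossB_mk] at hc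
        refine ⟨u, v, rfl, ?_⟩
        by_cases hu : u ∈ S <;> by_cases hv : v ∈ S <;> simp [hu, hv] at hc ⊢
  · rintro ⟨S, rfl⟩
    refine ⟨S, fun e => ?_⟩
    rw [mem_cutF, SimpleGraph.mem_edgeFinset]
    constructor
    · rintro ⟨he, hc⟩
      refine ⟨he, ?_⟩
      induction e with
      | _ u v =>
        rw [crossB_mk] at hc
        refine ⟨u, v, rfl, ?_⟩
        by_cases hu : u ∈ S <;> by_cases hv : v ∈ S <;> simp [hu, hv] at hc ⊢
    · rintro ⟨he, u, v, rfl, h⟩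
      refine ⟨he, ?_⟩
      rw [crossB_mk]
      rcases h with ⟨h1, h2⟩ | ⟨h1, h2⟩ <;> simp [h1, h2]

lemma cutF_symmDiff (S T : Finset V) : cutF G S ∆ cutF G T = cutF G (S ∆ T) := by
  ext e
  rw [Finset.mem_symmDiff, mem_cutF, mem_cutF, mem_cutF]
  induction e with
  | _ u v =>
    rw [crossB_mk, crossB_mk, crossB_mk]
    by_cases he : s(u,v) ∈ G.edgeFinset <;>
      by_cases h1 : u ∈ S <;> by_cases h2 : v ∈ S <;>
      by_cases h3 : u ∈ T <;> by_cases h4 : v ∈ T <;>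
      simp [he, h1, h2, h3, h4, Finset.mem_symmDiff]

lemma isCutset_symmDiff {A B : Finset (Sym2 V)} (hA : IsCutset G A) (hB : IsCutset G B) :
    IsCutset G (A ∆ B) := by
  rw [isCutset_iff] at *
  obtain ⟨S, rfl⟩ := hA
  obtain ⟨T, rfl⟩ := hB
  exact ⟨S ∆ T, (cutF_symmDiff G S T)⟩

lemma isCutset_empty : IsCutset G (∅ : Finset (Sym2 V)) := by
  refine ⟨∅, fun e => ?_⟩
  simp

end Graph

section Eul
variable {V : Type*} [Fintype V] [DecidableEq V] (G : SimpleGraph V) [DecidableRel G.Adj]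

lemma natCard_inc (A : Finset (Sym2 V)) (v : V) :
    Nat.card {e : Sym2 V // e ∈ A ∧ v ∈ e} = (A.filter (fun e => v ∈ e)).card := by
  rw [Nat.card_eq_fintype_card, Fintype.card_subtype]
  congr 1
  ext e
  simp [and_comm]

lemma isEul_iff {A : Finset (Sym2 V)} :
    IsEul A ↔ ∀ v : V, Even ((A.filter (fun e => v ∈ e)).card) := by
  unfold IsEul
  simp_rw [natCard_inc]

lemma even_iff_zmod {n : ℕ} : Even n ↔ ((n : ZMod 2) = 0) := by
  rw [ZMod.natCast_eq_zero_iff, even_iff_two_dvd]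

lemma cross_indicator (S : Finset V) {e : Sym2 V} (he : ¬ e.IsDiag) :
    (if crossB S e = true then (1 : ZMod 2) else 0) =
      ∑ v ∈ S, (if v ∈ e then (1 : ZMod 2) else 0) := by
  induction e with
  | _ u w =>
    have huw : u ≠ w := by simpa using he
    rw [crossB_mk]
    have : ∀ v ∈ S, (if v ∈ s(u, w) then (1 : ZMod 2) else 0) =
        (if v = u then (1 : ZMod 2) else 0) + (if v = w then (1 : ZMod 2) else 0) := by
      intro v _
      rcases eq_or_ne v u with rfl | h1 <;> rcases eq_or_ne v w with rfl | h2 <;>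
        simp_all [Sym2.mem_iff]
    rw [Finset.sum_congr rfl this, Finset.sum_add_distrib, Finset.sum_ite_eq' S u,
      Finset.sum_ite_eq' S w]
    by_cases hu : u ∈ S <;> by_cases hw : w ∈ S <;> simp [hu, hw] <;> decide

lemma inter_cutF_even {A : Finset (Sym2 V)} (hA : A ⊆ G.edgeFinset) (hE : IsEul A)
    (S : Finset V) : Even ((A ∩ cutF G S).card) := by
  have hfilter : A ∩ cutF G S = A.filter (fun e => crossB S e = true) := by
    ext e
    simp only [Finset.mem_inter, mem_cutF, Finset.mem_filter]
    exact ⟨fun ⟨h1, _, h3⟩ => ⟨h1, h3⟩, fun ⟨h1, h2⟩ => ⟨h1, hA h1, h2⟩⟩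
  rw [even_iff_zmod, hfilter, Finset.card_filter]
  push_cast
  have hrw : ∀ e ∈ A, (if crossB S e = true then (1 : ZMod 2) else 0) =
      ∑ v ∈ S, (if v ∈ e then (1 : ZMod 2) else 0) := by
    intro e heA
    exact cross_indicator S (SimpleGraph.not_isDiag_of_mem_edgeSet G
      (SimpleGraph.mem_edgeFinset.mp (hA heA)))
  rw [Finset.sum_congr rfl hrw, Finset.sum_comm]
  have : ∀ v ∈ S, ∑ e ∈ A, (if v ∈ e then (1 : ZMod 2) else 0) = 0 := by
    intro v _
    have hcast : ((A.filter fun e => v ∈ e).card : ZMod 2) =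
        ∑ e ∈ A, (if v ∈ e then (1 : ZMod 2) else 0) := by
      rw [Finset.card_filter]
      push_cast
      rfl
    rw [← hcast]
    rw [isEul_iff] at hE
    exact even_iff_zmod.mp (hE v)
  rw [Finset.sum_congr rfl this, Finset.sum_const, smul_zero]

lemma star_cutset (v₀ : V) {A : Finset (Sym2 V)} (hA : A ⊆ G.edgeFinset) :
    A ∩ cutF G {v₀} = A.filter (fun e => v₀ ∈ e) := by
  ext e
  simp only [Finset.mem_inter, mem_cutF, Finset.mem_filter]
  constructor
  · rintro ⟨h1, _, h3⟩
    refine ⟨h1, ?_⟩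
    revert h3
    induction e with
    | _ u w => by_cases hu : u = v₀ <;> by_cases hw : w = v₀ <;>
        simp [crossB_mk, hu, hw, Sym2.mem_iff]
  · rintro ⟨h1, h2⟩
    refine ⟨h1, hA h1, ?_⟩
    have hd : ¬ (e : Sym2 V).IsDiag := SimpleGraph.not_isDiag_of_mem_edgeSet G
      (SimpleGraph.mem_edgeFinset.mp (hA h1))
    revert h2 hd
    induction e with
    | _ u w =>
      intro h2 hd
      have huw : u ≠ w := by simpa using hd
      rw [Sym2.mem_iff] at h2
      rcases h2 with rfl | rfl <;> simp [crossB_mk, huw, huw.symm, Ne.symm huw]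

end Eul

section Count
variable {V : Type*} [Fintype V] [DecidableEq V] (G : SimpleGraph V) [DecidableRel G.Adj]

lemma invariant_of_adj {S : Finset V}
    (h : ∀ u v : V, G.Adj u v → (u ∈ S ↔ v ∈ S)) :
    ∀ u v : V, G.Reachable u v → (u ∈ S ↔ v ∈ S) := by
  intro u v huv
  obtain ⟨w⟩ := huv
  induction w with
  | nil => rfl
  | cons ha _ ih => exact (h _ _ ha).trans ih

lemma cutF_eq_empty_iff {S : Finset V} :
    cutF G S = ∅ ↔ ∀ u v : V, G.Adj u v → (u ∈ S ↔ v ∈ S) := by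
  rw [cutF, Finset.filter_eq_empty_iff]
  constructor
  · intro h u v hadj
    have := h (SimpleGraph.mem_edgeFinset.mpr (G.mem_edgeSet.mpr hadj))
    rw [crossB_mk] at this
    by_cases hu : u ∈ S <;> by_cases hv : v ∈ S <;> simp_all
  · intro h e he
    revert he
    induction e with
    | _ u v =>
      intro he
      have hadj : G.Adj u v := G.mem_edgeSet.mp (SimpleGraph.mem_edgeFinset.mp he)
      have := h u v hadj
      rw [crossB_mk]
      by_cases hu : u ∈ S <;> by_cases hv : v ∈ S <;> simp_all

lemma card_cutF_eq_empty :
    (Finset.univ.filter (fun S : Finset V => cutF G S = ∅)).card =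
      2 ^ (Nat.card G.ConnectedComponent) := by
  classical
  letI : Fintype G.ConnectedComponent := Fintype.ofFinite _
  rw [Nat.card_eq_fintype_card, ← Fintype.card_finset, ← Finset.card_univ]
  refine Finset.card_bij'
    (fun S _ => S.image G.connectedComponentMk)
    (fun T _ => Finset.univ.filter (fun v => G.connectedComponentMk v ∈ T))
    (fun S hS => Finset.mem_univ _) (fun T hT => ?_) (fun S hS => ?_) (fun T hT => ?_)
  · rw [Finset.mem_filter]
    refine ⟨Finset.mem_univ _, ?_⟩
    rw [cutF_eq_empty_iff]
    intro u v hadj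
    have : G.connectedComponentMk u = G.connectedComponentMk v :=
      SimpleGraph.ConnectedComponent.eq.mpr hadj.reachable
    simp [this]
  · rw [Finset.mem_filter] at hS
    have hinv := invariant_of_adj G ((cutF_eq_empty_iff G).mp hS.2)
    ext v
    simp only [Finset.mem_filter, Finset.mem_univ, true_and, Finset.mem_image]
    constructor
    · rintro ⟨u, hu, hequ⟩
      exact (hinv u v (SimpleGraph.ConnectedComponent.eq.mp hequ)).mp hu
    · intro hv
      exact ⟨v, hv, rfl⟩
  · ext c
    simp only [Finset.mem_image, Finset.mem_filter, Finset.mem_univ, true_and]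
    constructor
    · rintro ⟨v, hv, rfl⟩
      exact hv
    · intro hc
      obtain ⟨v, hv⟩ := c.exists_rep
      have hv' : G.connectedComponentMk v = c := hv
      exact ⟨v, by rw [hv']; exact hc, hv'⟩

lemma card_fiber_cutF (S₀ : Finset V) :
    (Finset.univ.filter (fun S : Finset V => cutF G S = cutF G S₀)).card =
      (Finset.univ.filter (fun S : Finset V => cutF G S = ∅)).card := by
  refine Finset.card_bij'
    (fun S _ => S ∆ S₀) (fun S _ => S ∆ S₀)
    (fun S hS => ?_) (fun S hS => ?_) (fun S _ => symmDiff_symmDiff_cancel_right S₀ S)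
    (fun S _ => symmDiff_symmDiff_cancel_right S₀ S)
  · rw [Finset.mem_filter] at hS ⊢
    refine ⟨Finset.mem_univ _, ?_⟩
    show cutF G (S ∆ S₀) = ∅
    rw [← cutF_symmDiff, hS.2, symmDiff_self]
    rfl
  · rw [Finset.mem_filter] at hS ⊢
    refine ⟨Finset.mem_univ _, ?_⟩
    show cutF G (S ∆ S₀) = cutF G S₀
    rw [← cutF_symmDiff, hS.2]
    simp

/-- the finset of cutsets -/
noncomputable def CF : Finset (Finset (Sym2 V)) :=
  @Finset.filter _ (IsCutset G) (Classical.decPred _) G.edgeFinset.powerset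

lemma mem_CF {A : Finset (Sym2 V)} : A ∈ CF G ↔ A ⊆ G.edgeFinset ∧ IsCutset G A := by
  unfold CF
  simp only [Finset.mem_filter, Finset.mem_powerset]

lemma CF_card_mul : (CF G).card * 2 ^ (Nat.card G.ConnectedComponent) =
    2 ^ (Fintype.card V) := by
  classical
  have hmaps : ∀ S ∈ (Finset.univ : Finset (Finset V)), cutF G S ∈ CF G := by
    intro S _
    rw [mem_CF]
    exact ⟨cutF_subset G S, (isCutset_iff G).mpr ⟨S, rfl⟩⟩
  have hthis := Finset.card_eq_sum_card_fiberwise hmaps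
  rw [Finset.card_univ, Fintype.card_finset] at hthis
  have hsum : ∑ X ∈ CF G, (Finset.univ.filter (fun S : Finset V => cutF G S = X)).card
      = ∑ _X ∈ CF G, 2 ^ (Nat.card G.ConnectedComponent) := by
    refine Finset.sum_congr rfl (fun X hX => ?_)
    obtain ⟨S₀, rfl⟩ := (isCutset_iff G).mp ((mem_CF G).mp hX).2
    rw [card_fiber_cutF, card_cutF_eq_empty]
  rw [hthis, hsum, Finset.sum_const, smul_eq_mul]

lemma nk_le : Nat.card G.ConnectedComponent ≤ Fintype.card V := by
  have h := CF_card_mul G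
  have hpos : 1 ≤ (CF G).card := by
    rw [Finset.one_le_card]
    exact ⟨∅, (mem_CF G).mpr ⟨Finset.empty_subset _, isCutset_empty G⟩⟩
  have : 2 ^ (Nat.card G.ConnectedComponent) ≤ 2 ^ (Fintype.card V) := by
    calc 2 ^ (Nat.card G.ConnectedComponent)
        ≤ (CF G).card * 2 ^ (Nat.card G.ConnectedComponent) :=
          Nat.le_mul_of_pos_left _ hpos
      _ = 2 ^ (Fintype.card V) := h
  exact (Nat.pow_le_pow_iff_right (by norm_num)).mp this

lemma CF_card : (CF G).card =
    2 ^ (Fintype.card V - Nat.card G.ConnectedComponent) := by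
  have h := CF_card_mul G
  have hk := nk_le G
  have h2 : 2 ^ (Fintype.card V - Nat.card G.ConnectedComponent) *
      2 ^ (Nat.card G.ConnectedComponent) = 2 ^ (Fintype.card V) := by
    rw [← pow_add, Nat.sub_add_cancel hk]
  exact Nat.eq_of_mul_eq_mul_right (by positivity) (h.trans h2.symm)

end Count

section Char
variable {V : Type*} [Fintype V] [DecidableEq V] (G : SimpleGraph V) [DecidableRel G.Adj]

lemma neg_one_pow_symmDiff (P Q : Finset (Sym2 V)) :
    ((-1 : ℂ)) ^ ((P ∆ Q).card) = (-1) ^ P.card * (-1) ^ Q.card := by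
  have h1 := Finset.card_inter_add_card_sdiff P Q
  have h2 := Finset.card_inter_add_card_sdiff Q P
  have h3 : (P ∆ Q).card = (P \ Q).card + (Q \ P).card := by
    rw [symmDiff_def]
    exact Finset.card_union_of_disjoint disjoint_sdiff_sdiff
  have h4 : (Q ∩ P).card = (P ∩ Q).card := by rw [Finset.inter_comm]
  have h5 : P.card + Q.card = (P ∆ Q).card + 2 * (P ∩ Q).card := by omega
  have : ((-1 : ℂ)) ^ (P.card + Q.card) = (-1) ^ ((P ∆ Q).card + 2 * (P ∩ Q).card) := by
    rw [h5]
  rw [pow_add, pow_add, pow_mul] at this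
  simp only [neg_one_sq, one_pow, mul_one] at this
  exact this.symm

lemma inter_symmDiff (A X Y : Finset (Sym2 V)) :
    A ∩ (X ∆ Y) = (A ∩ X) ∆ (A ∩ Y) := by
  ext e
  simp only [Finset.mem_inter, Finset.mem_symmDiff]
  tauto

open Classical in
lemma char_sum (A : Finset (Sym2 V)) (hA : A ⊆ G.edgeFinset) :
    ∑ X ∈ CF G, ((-1 : ℂ)) ^ ((A ∩ X).card) =
      if IsEul A then ((CF G).card : ℂ) else 0 := by
  classical
  by_cases hE : IsEul A
  · rw [if_pos hE]
    rw [Finset.sum_congr rfl (fun X hX => ?_), Finset.sum_const, nsmul_eq_mul, mul_one]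
    obtain ⟨S, rfl⟩ := (isCutset_iff G).mp ((mem_CF G).mp hX).2
    exact Even.neg_one_pow (inter_cutF_even G hA hE S)
  · rw [if_neg hE]
    rw [IsEul] at hE
    push_neg at hE
    obtain ⟨v₀, hv₀⟩ := hE
    rw [natCard_inc] at hv₀
    set X₀ : Finset (Sym2 V) := cutF G {v₀} with hX₀def
    have hX₀mem : X₀ ∈ CF G := (mem_CF G).mpr ⟨cutF_subset G _, (isCutset_iff G).mpr ⟨_, rfl⟩⟩
    have hodd : (-1 : ℂ) ^ ((A ∩ X₀).card) = -1 := by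
      rw [hX₀def, star_cutset G v₀ hA]
      exact Odd.neg_one_pow (Nat.not_even_iff_odd.mp hv₀)
    have hswap : ∑ X ∈ CF G, ((-1 : ℂ)) ^ ((A ∩ (X ∆ X₀)).card) =
        ∑ X ∈ CF G, ((-1 : ℂ)) ^ ((A ∩ X).card) := by
      refine Finset.sum_nbij' (fun X => X ∆ X₀) (fun X => X ∆ X₀) ?_ ?_ ?_ ?_ ?_
      · intro X hX
        rw [mem_CF] at hX ⊢
        refine ⟨le_trans symmDiff_le_sup (Finset.union_subset hX.1 (cutF_subset G _)), ?_⟩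
        exact isCutset_symmDiff G hX.2 ((isCutset_iff G).mpr ⟨_, rfl⟩)
      · intro X hX
        rw [mem_CF] at hX ⊢
        refine ⟨le_trans symmDiff_le_sup (Finset.union_subset hX.1 (cutF_subset G _)), ?_⟩
        exact isCutset_symmDiff G hX.2 ((isCutset_iff G).mpr ⟨_, rfl⟩)
      · intro X _
        exact symmDiff_symmDiff_cancel_right X₀ X
      · intro X _
        exact symmDiff_symmDiff_cancel_right X₀ X
      · intro X _
        rfl
    have hneg : ∀ X, ((-1 : ℂ)) ^ ((A ∩ (X ∆ X₀)).card) = - ((-1 : ℂ)) ^ ((A ∩ X).card) := by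
      intro X
      rw [inter_symmDiff, neg_one_pow_symmDiff, hodd]
      ring
    rw [Finset.sum_congr rfl (fun X _ => hneg X), Finset.sum_neg_distrib] at hswap
    have h2 : (2 : ℂ) * ∑ X ∈ CF G, ((-1 : ℂ)) ^ ((A ∩ X).card) = 0 := by
      linear_combination - hswap
    have := mul_eq_zero.mp h2
    simpa using this

end Char

section PairSum
variable {α : Type*} [DecidableEq α]

lemma sum_pairs_union (c d : α → ℂ) (s : Finset α) :
    (∑ A ∈ s.powerset, ∑ B ∈ s.powerset,
      (if A ∪ B = s then (∏ a ∈ A, c a) * ∏ b ∈ B, d b else 0))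
    = ∏ e ∈ s, (c e + d e + c e * d e) := by
  induction s using Finset.induction_on with
  | empty => simp
  | @insert x s hx ih =>
    have hxt : ∀ t : Finset α, t ⊆ s → x ∉ t := fun t ht hxt => hx (ht hxt)
    have hcond : ∀ t : Finset α, t ⊆ s → (insert x t = insert x s ↔ t = s) := by
      intro t ht
      constructor
      · intro h
        have := congrArg (fun u => Finset.erase u x) h
        simpa [Finset.erase_insert (hxt t ht), Finset.erase_insert hx] using this
      · intro h; rw [h]
    have hzero : ∀ A B : Finset α, A ⊆ s → B ⊆ s → (A ∪ B ≠ insert x s) := by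
      intro A B hA hB h
      have : x ∈ A ∪ B := h ▸ Finset.mem_insert_self x s
      rw [Finset.mem_union] at this
      rcases this with h' | h'
      · exact hxt A hA h'
      · exact hxt B hB h'
    rw [Finset.sum_powerset_insert hx]
    have key1 : ∀ A ∈ s.powerset,
        (∑ B ∈ (insert x s).powerset,
          (if A ∪ B = insert x s then (∏ a ∈ A, c a) * ∏ b ∈ B, d b else 0))
        = d x * ∑ B ∈ s.powerset,
            (if A ∪ B = s then (∏ a ∈ A, c a) * ∏ b ∈ B, d b else 0) := by
      intro A hA
      rw [Finset.mem_powerset] at hA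
      rw [Finset.sum_powerset_insert hx, Finset.mul_sum]
      have z1 : ∀ B ∈ s.powerset,
          (if A ∪ B = insert x s then (∏ a ∈ A, c a) * ∏ b ∈ B, d b else 0) = 0 := by
        intro B hB
        rw [Finset.mem_powerset] at hB
        rw [if_neg (hzero A B hA hB)]
      rw [Finset.sum_congr rfl z1, Finset.sum_const_zero, zero_add]
      refine Finset.sum_congr rfl (fun B hB => ?_)
      rw [Finset.mem_powerset] at hB
      simp only [Finset.union_insert, hcond _ (Finset.union_subset hA hB),
        Finset.prod_insert (hxt B hB)]
      split_ifs with h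
      · ring
      · ring
    have key2 : ∀ A ∈ s.powerset,
        (∑ B ∈ (insert x s).powerset,
          (if insert x A ∪ B = insert x s then (∏ a ∈ insert x A, c a) * ∏ b ∈ B, d b else 0))
        = (c x + c x * d x) * ∑ B ∈ s.powerset,
            (if A ∪ B = s then (∏ a ∈ A, c a) * ∏ b ∈ B, d b else 0) := by
      intro A hA
      rw [Finset.mem_powerset] at hA
      rw [Finset.sum_powerset_insert hx, Finset.mul_sum, ← Finset.sum_add_distrib]
      refine Finset.sum_congr rfl (fun B hB => ?_)
      rw [Finset.mem_powerset] at hB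
      have h1 : insert x A ∪ B = insert x (A ∪ B) := Finset.insert_union x A B
      have h2 : insert x A ∪ insert x B = insert x (A ∪ B) := by
        rw [Finset.insert_union, Finset.union_insert, Finset.insert_idem]
      simp only [h1, h2, hcond _ (Finset.union_subset hA hB), Finset.prod_insert (hxt A hA),
        Finset.prod_insert (hxt B hB)]
      split_ifs with h
      · ring
      · ring
    rw [Finset.sum_congr rfl key1, Finset.sum_congr rfl key2,
      ← Finset.mul_sum, ← Finset.mul_sum, Finset.prod_insert hx, ← ih]
    ring
end PairSum

section ClaimP
variable {α : Type*} [DecidableEq α]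

lemma om_inv_pow (b : ℕ) : ((om : ℂ) ^ b)⁻¹ = (om ^ 2) ^ b := by
  refine inv_eq_of_mul_eq_one_left ?_
  rw [← mul_pow]
  have h : om ^ 2 * om = 1 := by linear_combination om_pow_three
  rw [h, one_pow]

lemma om_zpow_sub (a b : ℕ) : (om : ℂ) ^ ((a : ℤ) - b) = om ^ a * (om ^ 2) ^ b := by
  rw [sub_eq_add_neg, zpow_add₀ om_ne_zero, zpow_natCast, zpow_neg, zpow_natCast, om_inv_pow]

lemma prod_sign (A X : Finset α) :
    (∏ a ∈ A, (if a ∈ X then (-1 : ℂ) else 1)) = (-1) ^ ((A ∩ X).card) := by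
  rw [Finset.prod_ite _ _]
  rw [Finset.prod_const, Finset.prod_const, one_pow, mul_one]
  congr 1

lemma claimP (s X Y : Finset α) (hX : X ⊆ s) (hY : Y ⊆ s) :
    (∑ A ∈ s.powerset, ∑ B ∈ s.powerset,
      (if A ∪ B = s then
        om ^ ((A.card : ℤ) - B.card) * (-1) ^ ((A ∩ X).card) * (-1) ^ ((B ∩ Y).card)
      else 0))
    = if X ∪ Y = s then (2 : ℂ) ^ s.card * om ^ ((Y.card : ℤ) - X.card) else 0 := by
  set c : α → ℂ := fun e => om * (if e ∈ X then -1 else 1) with hc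
  set d : α → ℂ := fun e => om ^ 2 * (if e ∈ Y then -1 else 1) with hd
  have hmatch : ∀ A ∈ s.powerset, ∀ B ∈ s.powerset,
      om ^ ((A.card : ℤ) - B.card) * (-1) ^ ((A ∩ X).card) * (-1) ^ ((B ∩ Y).card)
      = (∏ a ∈ A, c a) * ∏ b ∈ B, d b := by
    intro A _ B _
    rw [hc, hd]
    rw [Finset.prod_mul_distrib, Finset.prod_mul_distrib, Finset.prod_const,
      Finset.prod_const, prod_sign, prod_sign, om_zpow_sub]
    ring
  have hstep : (∑ A ∈ s.powerset, ∑ B ∈ s.powerset,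
      (if A ∪ B = s then
        om ^ ((A.card : ℤ) - B.card) * (-1) ^ ((A ∩ X).card) * (-1) ^ ((B ∩ Y).card)
      else 0)) = ∏ e ∈ s, (c e + d e + c e * d e) := by
    rw [← sum_pairs_union c d s]
    refine Finset.sum_congr rfl (fun A hA => Finset.sum_congr rfl (fun B hB => ?_))
    split_ifs with h
    · exact hmatch A hA B hB
    · rfl
  rw [hstep]
  have hval : ∀ e ∈ s, c e + d e + c e * d e =
      if e ∈ X ∪ Y then (if e ∈ X then (if e ∈ Y then 2 else 2 * om ^ 2) else 2 * om)
      else 0 := by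
    intro e _
    rw [hc, hd]
    simp only [Finset.mem_union]
    by_cases hx : e ∈ X <;> by_cases hy : e ∈ Y <;> simp only [hx, hy, if_true, if_false,
      true_or, or_true, false_or, or_false]
    · linear_combination om_pow_three - om_sum
    · linear_combination - om_pow_three - om_sum
    · linear_combination - om_pow_three - om_sum
    · linear_combination om_pow_three + om_sum
  rw [Finset.prod_congr rfl hval]
  by_cases hXY : X ∪ Y = s
  · rw [if_pos hXY]
    have hmem : ∀ e ∈ s, e ∈ X ∪ Y := fun e he => hXY ▸ he
    have h1 : (∏ e ∈ s, (if e ∈ X ∪ Y then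
        (if e ∈ X then (if e ∈ Y then (2:ℂ) else 2 * om ^ 2) else 2 * om) else 0))
        = ∏ e ∈ s, (if e ∈ X then (if e ∈ Y then (2:ℂ) else 2 * om ^ 2) else 2 * om) :=
      Finset.prod_congr rfl (fun e he => if_pos (hmem e he))
    rw [h1, Finset.prod_ite _ _]
    have hfX : s.filter (fun e => e ∈ X) = X := by
      rw [Finset.filter_mem_eq_inter, Finset.inter_comm, Finset.inter_eq_left.mpr hX]
    have hfnX : s.filter (fun e => e ∉ X) = Y \ X := by
      rw [← Finset.sdiff_eq_filter]
      rw [← hXY, Finset.union_sdiff_left]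
    rw [hfX, hfnX, Finset.prod_ite _ _, Finset.prod_const, Finset.prod_const,
      Finset.prod_const, Finset.filter_mem_eq_inter, ← Finset.sdiff_eq_filter]
    -- now: (2^(X∩Y).card * (2*om^2)^(X\Y).card) * (2*om)^(Y\X).card = 2^s.card * om^...
    rw [mul_pow, mul_pow]
    have hcard1 := Finset.card_inter_add_card_sdiff X Y
    have hcard2 := Finset.card_inter_add_card_sdiff Y X
    have hcards : (X ∩ Y).card + (X \ Y).card + (Y \ X).card = s.card := by
      have hdisj : Disjoint X (Y \ X) := Finset.disjoint_sdiff
      have hun : X ∪ (Y \ X) = s := by rw [Finset.union_sdiff_self_eq_union, hXY]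
      have := Finset.card_union_of_disjoint hdisj
      rw [hun] at this
      omega
    have hexp : ((Y.card : ℤ) - X.card) = (2 * (X \ Y).card + (Y \ X).card : ℕ) -
        3 * ((X \ Y).card : ℤ) := by
      have h3 : (Y ∩ X).card = (X ∩ Y).card := by rw [Finset.inter_comm]
      push_cast
      omega
    have hompow : om ^ ((Y.card : ℤ) - X.card) = (om ^ 2) ^ ((X \ Y).card) * om ^ ((Y \ X).card) := by
      rw [hexp, sub_eq_add_neg, zpow_add₀ om_ne_zero, zpow_natCast, zpow_neg]
      rw [← zpow_natCast om (2 * (X \ Y).card + (Y \ X).card)]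
      have : om ^ ((3 : ℤ) * ((X \ Y).card : ℤ)) = 1 := by
        have h3 : (om : ℂ) ^ (3 : ℤ) = 1 := by
          have := om_pow_three
          rw [show ((3:ℤ)) = ((3:ℕ):ℤ) by norm_num, zpow_natCast]
          exact this
        rw [zpow_mul, h3, one_zpow]
      rw [this, inv_one, mul_one, zpow_natCast, pow_add, pow_mul]
    rw [hompow, ← hcards, pow_add, pow_add]
    ring
  · rw [if_neg hXY]
    have : ∃ e ∈ s, e ∉ X ∪ Y := by
      have hsub : X ∪ Y ⊆ s := Finset.union_subset hX hY
      by_contra h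
      push_neg at h
      exact hXY (Finset.Subset.antisymm hsub h)
    obtain ⟨e, he, hne⟩ := this
    refine Finset.prod_eq_zero he ?_
    rw [if_neg hne]

end ClaimP

section Main
variable {V : Type*} [Fintype V] [DecidableEq V] (G : SimpleGraph V) [DecidableRel G.Adj]

open Classical in
lemma key_identity :
    (((CF G).card : ℂ)) ^ 2 *
      (∑ A ∈ G.edgeFinset.powerset, ∑ B ∈ G.edgeFinset.powerset,
        if IsEul A ∧ IsEul B ∧ A ∪ B = G.edgeFinset then
          om ^ ((A.card : ℤ) - (B.card : ℤ)) else 0)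
    = 2 ^ G.edgeFinset.card *
      (∑ A ∈ G.edgeFinset.powerset, ∑ B ∈ G.edgeFinset.powerset,
        if IsCutset G A ∧ IsCutset G B ∧ A ∪ B = G.edgeFinset then
          om ^ ((A.card : ℤ) - (B.card : ℤ)) else 0) := by
  set E := G.edgeFinset with hEdef
  have stepAB : (((CF G).card : ℂ)) ^ 2 *
      (∑ A ∈ E.powerset, ∑ B ∈ E.powerset,
        if IsEul A ∧ IsEul B ∧ A ∪ B = E then om ^ ((A.card : ℤ) - (B.card : ℤ)) else 0)
      = ∑ A ∈ E.powerset, ∑ B ∈ E.powerset, ∑ X ∈ CF G, ∑ Y ∈ CF G,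
          (if A ∪ B = E then om ^ ((A.card : ℤ) - (B.card : ℤ)) *
            (-1) ^ ((A ∩ X).card) * (-1) ^ ((B ∩ Y).card) else 0) := by
    rw [Finset.mul_sum]
    refine Finset.sum_congr rfl (fun A hA => ?_)
    rw [Finset.mul_sum]
    refine Finset.sum_congr rfl (fun B hB => ?_)
    have hAs : A ⊆ E := Finset.mem_powerset.mp hA
    have hBs : B ⊆ E := Finset.mem_powerset.mp hB
    by_cases hcond : A ∪ B = E
    · have expand : ∑ X ∈ CF G, ∑ Y ∈ CF G,
          (if A ∪ B = E then om ^ ((A.card : ℤ) - (B.card : ℤ)) *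
            (-1) ^ ((A ∩ X).card) * (-1) ^ ((B ∩ Y).card) else 0)
          = om ^ ((A.card : ℤ) - (B.card : ℤ)) *
              ((∑ X ∈ CF G, ((-1 : ℂ)) ^ ((A ∩ X).card)) *
               (∑ Y ∈ CF G, ((-1 : ℂ)) ^ ((B ∩ Y).card))) := by
        calc ∑ X ∈ CF G, ∑ Y ∈ CF G,
            (if A ∪ B = E then om ^ ((A.card : ℤ) - (B.card : ℤ)) *
              (-1) ^ ((A ∩ X).card) * (-1) ^ ((B ∩ Y).card) else 0)
            = ∑ X ∈ CF G, ∑ Y ∈ CF G, om ^ ((A.card : ℤ) - (B.card : ℤ)) *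
              (-1) ^ ((A ∩ X).card) * (-1) ^ ((B ∩ Y).card) :=
              Finset.sum_congr rfl (fun X _ => Finset.sum_congr rfl (fun Y _ => if_pos hcond))
          _ = om ^ ((A.card : ℤ) - (B.card : ℤ)) * ∑ X ∈ CF G, ∑ Y ∈ CF G,
              ((-1 : ℂ)) ^ ((A ∩ X).card) * (-1) ^ ((B ∩ Y).card) := by
              rw [Finset.mul_sum]
              refine Finset.sum_congr rfl (fun X _ => ?_)
              rw [Finset.mul_sum]
              exact Finset.sum_congr rfl (fun Y _ => by ring)
          _ = om ^ ((A.card : ℤ) - (B.card : ℤ)) *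
              ((∑ X ∈ CF G, ((-1 : ℂ)) ^ ((A ∩ X).card)) *
               (∑ Y ∈ CF G, ((-1 : ℂ)) ^ ((B ∩ Y).card))) := by
              rw [Finset.sum_mul_sum]
      rw [expand, char_sum G A hAs, char_sum G B hBs]
      by_cases h1 : IsEul A <;> by_cases h2 : IsEul B <;>
        simp [h1, h2, hcond] <;> ring
    · simp [hcond]
  have stepC : (∑ A ∈ E.powerset, ∑ B ∈ E.powerset, ∑ X ∈ CF G, ∑ Y ∈ CF G,
          (if A ∪ B = E then om ^ ((A.card : ℤ) - (B.card : ℤ)) *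
            (-1) ^ ((A ∩ X).card) * (-1) ^ ((B ∩ Y).card) else 0))
      = ∑ X ∈ CF G, ∑ Y ∈ CF G, ∑ A ∈ E.powerset, ∑ B ∈ E.powerset,
          (if A ∪ B = E then om ^ ((A.card : ℤ) - (B.card : ℤ)) *
            (-1) ^ ((A ∩ X).card) * (-1) ^ ((B ∩ Y).card) else 0) := by
    calc (∑ A ∈ E.powerset, ∑ B ∈ E.powerset, ∑ X ∈ CF G, ∑ Y ∈ CF G,
          (if A ∪ B = E then om ^ ((A.card : ℤ) - (B.card : ℤ)) *
            (-1) ^ ((A ∩ X).card) * (-1) ^ ((B ∩ Y).card) else 0))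
        = ∑ A ∈ E.powerset, ∑ X ∈ CF G, ∑ B ∈ E.powerset, ∑ Y ∈ CF G,
          (if A ∪ B = E then om ^ ((A.card : ℤ) - (B.card : ℤ)) *
            (-1) ^ ((A ∩ X).card) * (-1) ^ ((B ∩ Y).card) else 0) :=
          Finset.sum_congr rfl (fun A _ => Finset.sum_comm)
      _ = ∑ X ∈ CF G, ∑ A ∈ E.powerset, ∑ B ∈ E.powerset, ∑ Y ∈ CF G,
          (if A ∪ B = E then om ^ ((A.card : ℤ) - (B.card : ℤ)) *
            (-1) ^ ((A ∩ X).card) * (-1) ^ ((B ∩ Y).card) else 0) := Finset.sum_comm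
      _ = ∑ X ∈ CF G, ∑ A ∈ E.powerset, ∑ Y ∈ CF G, ∑ B ∈ E.powerset,
          (if A ∪ B = E then om ^ ((A.card : ℤ) - (B.card : ℤ)) *
            (-1) ^ ((A ∩ X).card) * (-1) ^ ((B ∩ Y).card) else 0) :=
          Finset.sum_congr rfl (fun X _ => Finset.sum_congr rfl (fun A _ => Finset.sum_comm))
      _ = ∑ X ∈ CF G, ∑ Y ∈ CF G, ∑ A ∈ E.powerset, ∑ B ∈ E.powerset,
          (if A ∪ B = E then om ^ ((A.card : ℤ) - (B.card : ℤ)) *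
            (-1) ^ ((A ∩ X).card) * (-1) ^ ((B ∩ Y).card) else 0) :=
          Finset.sum_congr rfl (fun X _ => Finset.sum_comm)
  have stepD : (∑ X ∈ CF G, ∑ Y ∈ CF G, ∑ A ∈ E.powerset, ∑ B ∈ E.powerset,
          (if A ∪ B = E then om ^ ((A.card : ℤ) - (B.card : ℤ)) *
            (-1) ^ ((A ∩ X).card) * (-1) ^ ((B ∩ Y).card) else 0))
      = ∑ X ∈ CF G, ∑ Y ∈ CF G,
          (if X ∪ Y = E then (2 : ℂ) ^ E.card * om ^ ((Y.card : ℤ) - (X.card : ℤ)) else 0) := by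
    refine Finset.sum_congr rfl (fun X hX => Finset.sum_congr rfl (fun Y hY => ?_))
    exact claimP E X Y ((mem_CF G).mp hX).1 ((mem_CF G).mp hY).1
  have stepE : (∑ X ∈ CF G, ∑ Y ∈ CF G,
          (if X ∪ Y = E then (2 : ℂ) ^ E.card * om ^ ((Y.card : ℤ) - (X.card : ℤ)) else 0))
      = 2 ^ E.card * ∑ X ∈ CF G, ∑ Y ∈ CF G,
          (if X ∪ Y = E then om ^ ((X.card : ℤ) - (Y.card : ℤ)) else 0) := by
    rw [Finset.mul_sum]
    rw [Finset.sum_comm]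
    refine Finset.sum_congr rfl (fun X _ => ?_)
    rw [Finset.mul_sum]
    refine Finset.sum_congr rfl (fun Y _ => ?_)
    rw [Finset.union_comm]
    split_ifs with h
    · ring
    · ring
  have stepF : (∑ X ∈ CF G, ∑ Y ∈ CF G,
          (if X ∪ Y = E then om ^ ((X.card : ℤ) - (Y.card : ℤ)) else 0))
      = ∑ A ∈ E.powerset, ∑ B ∈ E.powerset,
          (if IsCutset G A ∧ IsCutset G B ∧ A ∪ B = E then
            om ^ ((A.card : ℤ) - (B.card : ℤ)) else 0) := by
    have hCF : CF G = E.powerset.filter (IsCutset G) := by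
      unfold CF
      apply Finset.filter_congr_decidable
    rw [hCF, Finset.sum_filter]
    refine Finset.sum_congr rfl (fun A hA => ?_)
    by_cases h1 : IsCutset G A
    · rw [if_pos h1, Finset.sum_filter]
      refine Finset.sum_congr rfl (fun B hB => ?_)
      by_cases h2 : IsCutset G B
      · by_cases h3 : A ∪ B = E <;> simp [h1, h2, h3]
      · simp [h1, h2]
    · simp [h1]
  rw [stepAB, stepC, stepD, stepE, stepF]

end Main

open Classical in
theorem stmt_17 {V : Type*} [Fintype V] [DecidableEq V] (G : SimpleGraph V)
    [DecidableRel G.Adj] :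
    (2 : ℂ) ^ ((Fintype.card V : ℤ) - (Nat.card G.ConnectedComponent : ℤ)) *
      (∑ A ∈ G.edgeFinset.powerset, ∑ B ∈ G.edgeFinset.powerset,
        if IsEul A ∧ IsEul B ∧ A ∪ B = G.edgeFinset then
          Complex.exp (2 * Real.pi * Complex.I / 3) ^ ((A.card : ℤ) - (B.card : ℤ))
        else 0) =
    (2 : ℂ) ^ ((G.edgeFinset.card : ℤ) - (Fintype.card V : ℤ) +
        (Nat.card G.ConnectedComponent : ℤ)) *
      (∑ A ∈ G.edgeFinset.powerset, ∑ B ∈ G.edgeFinset.powerset,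
        if IsCutset G A ∧ IsCutset G B ∧ A ∪ B = G.edgeFinset then
          Complex.exp (2 * Real.pi * Complex.I / 3) ^ ((A.card : ℤ) - (B.card : ℤ))
        else 0) := by
  have homdef : Complex.exp (2 * Real.pi * Complex.I / 3) = om := rfl
  rw [homdef]
  set n := Fintype.card V with hn
  set k := Nat.card G.ConnectedComponent with hk
  set m := G.edgeFinset.card with hm
  have hkn : k ≤ n := nk_le G
  have hKval : (((CF G).card : ℂ)) = (2 : ℂ) ^ ((n : ℤ) - (k : ℤ)) := by
    rw [CF_card G]
    push_cast
    rw [← zpow_natCast (2 : ℂ) (n - k), Nat.cast_sub hkn]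
  have hKne : (((CF G).card : ℂ)) ≠ 0 := by
    rw [hKval]
    exact zpow_ne_zero _ two_ne_zero
  set Se := (∑ A ∈ G.edgeFinset.powerset, ∑ B ∈ G.edgeFinset.powerset,
        if IsEul A ∧ IsEul B ∧ A ∪ B = G.edgeFinset then
          om ^ ((A.card : ℤ) - (B.card : ℤ)) else 0) with hSe
  set Sc := (∑ A ∈ G.edgeFinset.powerset, ∑ B ∈ G.edgeFinset.powerset,
        if IsCutset G A ∧ IsCutset G B ∧ A ∪ B = G.edgeFinset then
          om ^ ((A.card : ℤ) - (B.card : ℤ)) else 0) with hSc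
  have hkey : (((CF G).card : ℂ)) ^ 2 * Se = 2 ^ m * Sc := key_identity G
  apply mul_left_cancel₀ hKne
  calc (((CF G).card : ℂ)) * ((2 : ℂ) ^ ((n : ℤ) - (k : ℤ)) * Se)
      = (((CF G).card : ℂ)) ^ 2 * Se := by rw [hKval]; ring
    _ = 2 ^ m * Sc := hkey
    _ = (((CF G).card : ℂ)) * ((2 : ℂ) ^ ((m : ℤ) - (n : ℤ) + (k : ℤ)) * Sc) := by
        rw [hKval, ← mul_assoc, ← zpow_add₀ (two_ne_zero : (2:ℂ) ≠ 0)]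
        have : (n : ℤ) - k + ((m : ℤ) - n + k) = (m : ℤ) := by ring
        rw [this, zpow_natCast]
end

section
/- Let G be a finite simple cubic (3-regular) graph with vertex set V and edge set E, and let k(G) be its number of connected components. Let 𝔽₄ be the field with four elements. Then 2^{2|V| − |E| − 2k(G) + 1} · F(G;4) = 2 · #{𝔽₄-tensions z of G with ∏_{e ∈ E} z(e) = 1} − #{𝔽₄-tensions z of G with ∏_{e ∈ E} z(e) ∉ {0,1}}. -/
/-- An `𝔽₄`-tension of `G`: a function on the edges of the form
`z({u,v}) = c(u) + c(v)` for some vertex colouring `c : V → 𝔽₄`. -/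
def IsTension {V : Type*} (G : SimpleGraph V) (z : G.edgeSet → GaloisField 2 2) : Prop :=
  ∃ c : V → GaloisField 2 2,
    ∀ e : G.edgeSet, ∀ u v : V, (e : Sym2 V) = s(u, v) → z e = c u + c v

noncomputable section

abbrev K4 := GaloisField 2 2

namespace Aux

instance : Fintype K4 := Fintype.ofFinite _
instance : DecidableEq K4 := Classical.decEq _

lemma card_K4 : Fintype.card K4 = 4 := by
  have := GaloisField.card 2 2 (by norm_num)
  simpa [Nat.card_eq_fintype_card] using this

lemma two_eq_zero : (2 : K4) = 0 := by
  exact_mod_cast CharP.cast_eq_zero K4 2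

lemma exists_x : ∃ x : K4, x ≠ 0 ∧ x ≠ 1 := by
  by_contra h
  push_neg at h
  have hsub : (Finset.univ : Finset K4) ⊆ {0, 1} := by
    intro y _
    rcases eq_or_ne y 0 with h0 | h0
    · simp [h0]
    · simp [h y h0]
  have := Finset.card_le_card hsub
  rw [Finset.card_univ, card_K4] at this
  have h2 : ({0,1} : Finset K4).card ≤ 2 := (Finset.card_insert_le _ _).trans (by simp)
  omega

def x : K4 := exists_x.choose

lemma x_ne_zero : x ≠ 0 := exists_x.choose_spec.1
lemma x_ne_one : x ≠ 1 := exists_x.choose_spec.2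

lemma cube_eq_one {y : K4} (hy : y ≠ 0) : y ^ 3 = 1 := by
  have := FiniteField.pow_card_sub_one_eq_one y hy
  rwa [card_K4] at this

lemma x_sq : x ^ 2 = x + 1 := by
  have h3 : x ^ 3 = 1 := cube_eq_one x_ne_zero
  have h2 := two_eq_zero
  have hfac : (x + 1) * (x ^ 2 + x + 1) = 0 := by
    linear_combination h3 + (x ^ 2 + x + 1) * h2
  have hx1 : x + 1 ≠ 0 := by
    intro h
    apply x_ne_one
    linear_combination h - h2
  have := (mul_eq_zero.mp hfac).resolve_left hx1
  linear_combination this - (x + 1) * h2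

lemma x1_ne_zero : x + 1 ≠ 0 := fun h => x_ne_one (by linear_combination h - two_eq_zero)
lemma x1_ne_one : x + 1 ≠ 1 := fun h => x_ne_zero (by linear_combination h)
lemma x1_ne_x : x + 1 ≠ x := fun h => one_ne_zero (by linear_combination h)

lemma univ_K4 : (Finset.univ : Finset K4) = {0, 1, x, x + 1} := by
  symm
  apply Finset.eq_of_subset_of_card_le (Finset.subset_univ _)
  rw [Finset.card_univ, card_K4]
  have h0 : (0:K4) ∉ ({1, x, x+1} : Finset K4) := by
    simp only [Finset.mem_insert, Finset.mem_singleton]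
    push_neg
    exact ⟨zero_ne_one, fun h => x_ne_zero h.symm, fun h => x1_ne_zero h.symm⟩
  have h1 : (1:K4) ∉ ({x, x+1} : Finset K4) := by
    simp only [Finset.mem_insert, Finset.mem_singleton]
    push_neg
    exact ⟨fun h => x_ne_one h.symm, fun h => x1_ne_one h.symm⟩
  have h2 : x ∉ ({x+1} : Finset K4) := by
    simp only [Finset.mem_singleton]
    exact fun h => x1_ne_x h.symm
  rw [Finset.card_insert_of_notMem h0, Finset.card_insert_of_notMem h1,
    Finset.card_insert_of_notMem h2, Finset.card_singleton]

lemma K4_cases (y : K4) : y = 0 ∨ y = 1 ∨ y = x ∨ y = x + 1 := by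
  have := Finset.mem_univ y
  rw [univ_K4] at this
  simpa using this

lemma mul_xx : x * x = x + 1 := by
  have := x_sq; linear_combination this
lemma mul_xx1 : x * (x + 1) = 1 := by
  linear_combination x_sq + x * two_eq_zero
lemma mul_x1x1 : (x + 1) * (x + 1) = x := by
  linear_combination x_sq + (x + 1) * two_eq_zero
lemma add_self (y : K4) : y + y = 0 := by
  linear_combination y * two_eq_zero

lemma neg_eq (y : K4) : -y = y := by linear_combination (-y) * two_eq_zero

-- addition table
lemma add_one_one : (1 : K4) + 1 = 0 := by linear_combination two_eq_zero
lemma add_xx : x + x = 0 := add_self x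
lemma add_1x : (1 : K4) + x = x + 1 := by ring
lemma add_x_x1 : x + (x + 1) = 1 := by linear_combination x * two_eq_zero
lemma add_x1_x : (x + 1) + x = 1 := by linear_combination x * two_eq_zero
lemma add_1_x1 : (1 : K4) + (x + 1) = x := by linear_combination two_eq_zero
lemma add_x1_1 : (x + 1) + 1 = x := by linear_combination two_eq_zero
lemma add_x1_x1 : (x + 1) + (x + 1) = 0 := add_self _
lemma mul_x1x : (x + 1) * x = 1 := by rw [mul_comm]; exact mul_xx1
def zeta : ℂ := Complex.exp (2 * Real.pi * Complex.I / 3)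
lemma zeta_prim : IsPrimitiveRoot zeta 3 := by
  have := Complex.isPrimitiveRoot_exp 3 (by norm_num)
  simpa [zeta, Complex.exp_eq_exp_iff_exists_int] using this
lemma zeta_cube : zeta ^ 3 = 1 := zeta_prim.pow_eq_one
lemma zeta_ne_one : zeta ≠ 1 := zeta_prim.ne_one (by norm_num)
lemma zeta_quad : zeta ^ 2 + zeta + 1 = 0 := by
  have h : (zeta - 1) * (zeta ^ 2 + zeta + 1) = 0 := by linear_combination zeta_cube
  exact (mul_eq_zero.mp h).resolve_left (sub_ne_zero.mpr zeta_ne_one)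

def chi : K4 → ℂ := fun y =>
  if y = 0 then 0 else if y = 1 then 1 else if y = x then zeta else zeta ^ 2

lemma chi_zero : chi 0 = 0 := by simp [chi]
lemma chi_one : chi 1 = 1 := by simp [chi]
lemma chi_x : chi x = zeta := by
  rw [chi, if_neg x_ne_zero, if_neg x_ne_one, if_pos rfl]
lemma chi_x1 : chi (x + 1) = zeta ^ 2 := by
  rw [chi, if_neg x1_ne_zero, if_neg x1_ne_one, if_neg x1_ne_x]

lemma chi_mul (a b : K4) : chi (a * b) = chi a * chi b := by
  rcases K4_cases a with rfl|rfl|rfl|rfl <;> rcases K4_cases b with rfl|rfl|rfl|rfl <;>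
    simp only [mul_xx, mul_xx1, mul_x1x, mul_x1x1, one_mul, mul_one, zero_mul, mul_zero,
      chi_zero, chi_one, chi_x, chi_x1] <;>
    first
      | ring1
      | linear_combination zeta_cube
      | linear_combination -zeta_cube
      | linear_combination zeta * zeta_cube
      | linear_combination -zeta * zeta_cube

def eps : K4 → ℂ := fun y => if y = 0 ∨ y = 1 then 1 else -1

lemma eps_zero : eps 0 = 1 := by simp [eps]
lemma eps_one : eps 1 = 1 := by simp [eps]
lemma eps_x : eps x = -1 := by
  rw [eps, if_neg]
  push_neg
  exact ⟨x_ne_zero, x_ne_one⟩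
lemma eps_x1 : eps (x + 1) = -1 := by
  rw [eps, if_neg]
  push_neg
  exact ⟨x1_ne_zero, x1_ne_one⟩

lemma eps_add (a b : K4) : eps (a + b) = eps a * eps b := by
  rcases K4_cases a with rfl|rfl|rfl|rfl <;> rcases K4_cases b with rfl|rfl|rfl|rfl <;>
    simp only [add_one_one, add_xx, add_1x, add_x_x1, add_x1_x, add_1_x1, add_x1_1,
      add_x1_x1, zero_add, add_zero, eps_zero, eps_one, eps_x, eps_x1] <;> norm_num

lemma nm0 : (0:K4) ∉ ({1, x, x+1} : Finset K4) := by
  simp only [Finset.mem_insert, Finset.mem_singleton]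
  push_neg
  exact ⟨zero_ne_one, fun h => x_ne_zero h.symm, fun h => x1_ne_zero h.symm⟩
lemma nm1 : (1:K4) ∉ ({x, x+1} : Finset K4) := by
  simp only [Finset.mem_insert, Finset.mem_singleton]
  push_neg
  exact ⟨fun h => x_ne_one h.symm, fun h => x1_ne_one h.symm⟩
lemma nm2 : x ∉ ({x+1} : Finset K4) := by
  simp only [Finset.mem_singleton]
  exact fun h => x1_ne_x h.symm

lemma sum_K4 (f : K4 → ℂ) : ∑ y : K4, f y = f 0 + f 1 + f x + f (x+1) := by
  rw [show (Finset.univ : Finset K4) = {0,1,x,x+1} from univ_K4, Finset.sum_insert nm0,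
    Finset.sum_insert nm1, Finset.sum_insert nm2, Finset.sum_singleton]
  ring

lemma sum_chi : ∑ y : K4, chi y = 0 := by
  rw [sum_K4, chi_zero, chi_one, chi_x, chi_x1]
  linear_combination zeta_quad

lemma sum_eps_mul (d : K4) : ∑ y : K4, eps (y * d) = if d = 0 then 4 else 0 := by
  rcases K4_cases d with rfl|rfl|rfl|rfl
  · rw [if_pos rfl, sum_K4]
    simp only [mul_zero, eps_zero]; norm_num
  · rw [if_neg one_ne_zero, sum_K4]
    simp only [mul_one, eps_zero, eps_one, eps_x, eps_x1]; ring
  · rw [if_neg x_ne_zero, sum_K4]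
    rw [zero_mul, one_mul, mul_xx, mul_x1x, eps_zero, eps_one, eps_x, eps_x1]; ring
  · rw [if_neg x1_ne_zero, sum_K4]
    rw [zero_mul, one_mul, mul_xx1, mul_x1x1, eps_zero, eps_one, eps_x, eps_x1]; ring

lemma gauss (s : K4) : ∑ t : K4, chi t ^ 2 * eps (t * s) = 2 * chi s := by
  rcases K4_cases s with rfl|rfl|rfl|rfl <;>
    rw [sum_K4] <;>
    simp only [mul_zero, zero_mul, one_mul, mul_one, mul_xx, mul_xx1, mul_x1x, mul_x1x1,
      chi_zero, chi_one, chi_x, chi_x1, eps_zero, eps_one, eps_x, eps_x1] <;>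
    first
      | linear_combination zeta * zeta_cube + zeta_quad
      | linear_combination -zeta * zeta_cube - zeta_quad
      | linear_combination zeta * zeta_cube - zeta_quad
      | linear_combination -zeta * zeta_cube + zeta_quad

lemma chi_w (y : K4) :
    chi y + chi (y * y) = if y = 0 then 0 else if y = 1 then 2 else (-1:ℂ) := by
  rcases K4_cases y with rfl|rfl|rfl|rfl
  · simp [chi_zero]
  · simp [chi_one]; norm_num
  · rw [if_neg x_ne_zero, if_neg x_ne_one, mul_xx, chi_x, chi_x1]
    linear_combination zeta_quad
  · rw [if_neg x1_ne_zero, if_neg x1_ne_one, mul_x1x1, chi_x, chi_x1]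
    linear_combination zeta_quad

lemma chi_prod {α : Type*} (s : Finset α) (f : α → K4) :
    chi (∏ i ∈ s, f i) = ∏ i ∈ s, chi (f i) := by
  induction s using Finset.cons_induction with
  | empty => simp [chi_one]
  | cons a s ha ih => rw [Finset.prod_cons, Finset.prod_cons, chi_mul, ih]

lemma eps_sum {α : Type*} (s : Finset α) (f : α → K4) :
    eps (∑ i ∈ s, f i) = ∏ i ∈ s, eps (f i) := by
  induction s using Finset.cons_induction with
  | empty => simp [eps_zero]
  | cons a s ha ih => rw [Finset.sum_cons, Finset.prod_cons, eps_add, ih]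

lemma cast_even {n : ℕ} (h : Even n) : (n : K4) = 0 := by
  rw [CharP.cast_eq_zero_iff K4 2]
  exact even_iff_two_dvd.mp h

lemma cast_not_even {n : ℕ} (h : ¬ Even n) : (n : K4) = 1 := by
  obtain ⟨k, hk⟩ := Nat.not_even_iff_odd.mp h
  subst hk
  push_cast
  rw [two_eq_zero]
  ring

lemma cast_eq_zero_iff (n : ℕ) : (n : K4) = 0 ↔ Even n := by
  constructor
  · intro h
    by_contra he
    rw [cast_not_even he] at h
    exact one_ne_zero h
  · exact cast_even

lemma abc_eq_one (a b c : K4) (ha : a ≠ 0) (hb : b ≠ 0) (hc : c ≠ 0)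
    (h : a + b + c = 0) : a * b * c = 1 := by
  have hc' : c = a + b := by linear_combination h - (a + b) * two_eq_zero
  subst hc'
  rcases K4_cases a with rfl|rfl|rfl|rfl <;> rcases K4_cases b with rfl|rfl|rfl|rfl <;>
    simp only [add_one_one, add_xx, add_1x, add_x_x1, add_x1_x, add_1_x1, add_x1_1,
      add_x1_x1, mul_xx, mul_xx1, mul_x1x, mul_x1x1, one_mul, mul_one, zero_mul,
      mul_zero, zero_add, add_zero] at ha hb hc ⊢ <;>
    first
      | rfl
      | exact absurd rfl ha
      | exact absurd rfl hb
      | exact absurd rfl hc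


lemma sq_eq_one {y : K4} (h : y ^ 2 = 1) : y = 1 := by
  have h0 : (y + 1) ^ 2 = 0 := by linear_combination h + (y + 1) * two_eq_zero
  have := pow_eq_zero_iff (two_ne_zero) |>.mp h0
  linear_combination this - two_eq_zero

section Graph

variable {V : Type*} [Fintype V] [DecidableEq V] (G : SimpleGraph V) [DecidableRel G.Adj]

/-- the incident edges of `v`, as a finset of the edge subtype -/
def inc (v : V) : Finset G.edgeSet :=
  Finset.univ.filter (fun e => v ∈ (e : Sym2 V))

lemma mem_inc {v : V} {e : G.edgeSet} : e ∈ inc G v ↔ v ∈ (e : Sym2 V) := by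
  simp [inc]

def IsFlow (T : G.edgeSet → K4) : Prop := ∀ v : V, ∑ e ∈ inc G v, T e = 0

lemma edge_repr (e : G.edgeSet) : ∃ u v : V, G.Adj u v ∧ (e : Sym2 V) = s(u, v) := by
  obtain ⟨e, he⟩ := e
  induction e using Sym2.ind with
  | _ u v => exact ⟨u, v, (SimpleGraph.mem_edgeSet G).mp he, rfl⟩

lemma filter_mem_sym2 {u v : V} (h : u ≠ v) :
    (Finset.univ.filter (fun w => w ∈ s(u, v))) = ({u, v} : Finset V) := by
  ext w
  simp [Sym2.mem_iff]

lemma swap_add {M : Type*} [AddCommMonoid M] (g : V → G.edgeSet → M) :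
    ∑ v : V, ∑ e ∈ inc G v, g v e
      = ∑ e : G.edgeSet, ∑ v ∈ Finset.univ.filter (fun w => w ∈ (e : Sym2 V)), g v e := by
  simp only [inc, Finset.sum_filter]
  exact Finset.sum_comm

lemma swap_prod {M : Type*} [CommMonoid M] (g : V → G.edgeSet → M) :
    ∏ v : V, ∏ e ∈ inc G v, g v e
      = ∏ e : G.edgeSet, ∏ v ∈ Finset.univ.filter (fun w => w ∈ (e : Sym2 V)), g v e := by
  simp only [inc, Finset.prod_filter]
  exact Finset.prod_comm

lemma inc_card (v : V) : (inc G v).card = G.degree v := by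
  rw [← SimpleGraph.card_incidenceFinset_eq_degree]
  refine Finset.card_bij (fun e _ => (e : Sym2 V)) ?_ ?_ ?_
  · intro e he
    rw [SimpleGraph.mem_incidenceFinset]
    exact ⟨e.2, (mem_inc G).mp he⟩
  · intro e₁ _ e₂ _ h
    exact Subtype.ext h
  · intro b hb
    rw [SimpleGraph.mem_incidenceFinset] at hb
    exact ⟨⟨b, hb.1⟩, (mem_inc G).mpr hb.2, rfl⟩

lemma flow_prod_eq_one {T : G.edgeSet → K4} (hcubic : G.IsRegularOfDegree 3)
    (hT : IsFlow G T) (hnz : ∀ e, T e ≠ 0) : ∏ e : G.edgeSet, T e = 1 := by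
  have key : ∀ v : V, ∏ e ∈ inc G v, T e = 1 := by
    intro v
    have hcard : (inc G v).card = 3 := by rw [inc_card, hcubic v]
    obtain ⟨a, b, c, hab, hac, hbc, habc⟩ := Finset.card_eq_three.mp hcard
    have hsum := hT v
    rw [habc] at hsum ⊢
    rw [Finset.sum_insert (by simp [hab, hac]), Finset.sum_pair hbc] at hsum
    rw [Finset.prod_insert (by simp [hab, hac]), Finset.prod_pair hbc]
    rw [← mul_assoc]
    exact abc_eq_one _ _ _ (hnz a) (hnz b) (hnz c) (by linear_combination hsum)
  have sq : (∏ e : G.edgeSet, T e) ^ 2 = 1 := by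
    have h1 : ∏ v : V, ∏ e ∈ inc G v, T e = 1 := by
      simp [key]
    rw [swap_prod] at h1
    have h2 : ∀ e : G.edgeSet,
        (∏ v ∈ Finset.univ.filter (fun w => w ∈ (e : Sym2 V)), T e) = T e ^ 2 := by
      intro e
      obtain ⟨u, v, huv, hrep⟩ := edge_repr G e
      rw [hrep, filter_mem_sym2 huv.ne, Finset.prod_pair huv.ne]
      ring
    rw [Finset.prod_congr rfl (fun e _ => h2 e)] at h1
    rw [← h1, Finset.prod_pow]
  exact sq_eq_one sq

end Graph


section Graph2

variable {V : Type*} [Fintype V] [DecidableEq V] (G : SimpleGraph V) [DecidableRel G.Adj]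

def dd (c : V → K4) (e : G.edgeSet) : K4 :=
  Sym2.lift ⟨fun u v => c u + c v, fun u v => by ring⟩ (e : Sym2 V)

lemma dd_eq {c : V → K4} {u v : V} {e : G.edgeSet} (h : (e : Sym2 V) = s(u, v)) :
    dd G c e = c u + c v := by
  rw [dd, h, Sym2.lift_mk]

lemma isTension_iff (z : G.edgeSet → K4) : IsTension G z ↔ ∃ c, z = dd G c := by
  constructor
  · rintro ⟨c, hc⟩
    refine ⟨c, funext fun e => ?_⟩
    obtain ⟨u, v, _, hrep⟩ := edge_repr G e
    rw [hc e u v hrep, dd_eq G hrep]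
  · rintro ⟨c, rfl⟩
    exact ⟨c, fun e u v h => dd_eq G h⟩

lemma dd_add (c c' : V → K4) : dd G (c + c') = dd G c + dd G c' := by
  funext e
  obtain ⟨u, v, _, hrep⟩ := edge_repr G e
  simp only [Pi.add_apply, dd_eq G hrep]
  ring

lemma dd_sub (c c' : V → K4) : dd G (c - c') = dd G c - dd G c' := by
  funext e
  obtain ⟨u, v, _, hrep⟩ := edge_repr G e
  simp only [Pi.sub_apply, dd_eq G hrep]
  ring

noncomputable def secc (z : G.edgeSet → K4) : V → K4 :=
  if h : ∃ c, z = dd G c then h.choose else 0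

lemma secc_spec {z : G.edgeSet → K4} (h : ∃ c, z = dd G c) : dd G (secc G z) = z := by
  rw [secc, dif_pos h]
  exact h.choose_spec.symm

lemma tension_card (Q : (G.edgeSet → K4) → Prop) :
    Nat.card {c : V → K4 // Q (dd G c)}
      = Nat.card {z : G.edgeSet → K4 // IsTension G z ∧ Q z}
        * Nat.card {d : V → K4 // dd G d = 0} := by
  rw [← Nat.card_prod]
  apply Nat.card_congr
  refine
    { toFun := fun cq =>
        (⟨dd G cq.1, (isTension_iff G _).mpr ⟨cq.1, rfl⟩, cq.2⟩,
         ⟨cq.1 - secc G (dd G cq.1), by rw [dd_sub, secc_spec G ⟨cq.1, rfl⟩, sub_self]⟩)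
      invFun := fun zd =>
        ⟨secc G zd.1.1 + zd.2.1, by
          have hz : dd G (secc G zd.1.1 + zd.2.1) = zd.1.1 := by
            rw [dd_add, zd.2.2, add_zero, secc_spec G ((isTension_iff G _).mp zd.1.2.1)]
          rw [hz]
          exact zd.1.2.2⟩
      left_inv := ?_
      right_inv := ?_ }
  · intro cq
    apply Subtype.ext
    simp only [add_sub_cancel]
  · intro zd
    have hz : dd G (secc G zd.1.1 + zd.2.1) = zd.1.1 := by
      rw [dd_add, zd.2.2, add_zero, secc_spec G ((isTension_iff G _).mp zd.1.2.1)]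
    refine Prod.ext (Subtype.ext hz) (Subtype.ext ?_)
    simp only [hz, add_sub_cancel_left]

lemma ker_card :
    Nat.card {d : V → K4 // dd G d = 0} = 4 ^ Nat.card G.ConnectedComponent := by
  have hwalk : ∀ (d : {d : V → K4 // dd G d = 0}) (v w : V) (p : G.Walk v w),
      p.IsPath → d.1 v = d.1 w := by
    intro d
    have hadj : ∀ u v : V, G.Adj u v → d.1 u = d.1 v := by
      intro u v huv
      have h0 : dd G d.1 ⟨s(u, v), (SimpleGraph.mem_edgeSet G).mpr huv⟩ = 0 :=
        congrFun d.2 _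
      rw [dd_eq G rfl] at h0
      linear_combination h0 - (d.1 v) * two_eq_zero
    have : ∀ (v w : V) (p : G.Walk v w), d.1 v = d.1 w := by
      intro v w p
      induction p with
      | nil => rfl
      | cons h p ih => rw [hadj _ _ h]; exact ih
    exact fun v w p _ => this v w p
  have e1 : {d : V → K4 // dd G d = 0} ≃ (G.ConnectedComponent → K4) := by
    refine
      { toFun := fun d =>
          SimpleGraph.ConnectedComponent.lift d.1 (hwalk d)
        invFun := fun g =>
          ⟨fun v => g (G.connectedComponentMk v), ?_⟩
        left_inv := ?_
        right_inv := ?_ }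
    · funext e
      obtain ⟨u, v, huv, hrep⟩ := edge_repr G e
      rw [dd_eq G hrep, SimpleGraph.ConnectedComponent.sound huv.reachable]
      exact add_self _
    · intro d
      apply Subtype.ext
      funext v
      rfl
    · intro g
      funext cc
      induction cc using SimpleGraph.ConnectedComponent.ind with
      | _ v => rfl
  rw [Nat.card_congr e1, Nat.card_fun]
  congr 1
  rw [Nat.card_eq_fintype_card, card_K4]

end Graph2

section Graph3
open scoped Classical

variable {V : Type*} [Fintype V] [DecidableEq V] (G : SimpleGraph V) [DecidableRel G.Adj]

lemma inner_sum (T : G.edgeSet → K4) :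
    ∑ c : V → K4, ∏ e : G.edgeSet, eps (T e * dd G c e)
      = if IsFlow G T then (4:ℂ) ^ Fintype.card V else 0 := by
  classical
  have h1 : ∀ c : V → K4, ∏ e : G.edgeSet, eps (T e * dd G c e)
      = ∏ v : V, eps ((∑ e ∈ inc G v, T e) * c v) := by
    intro c
    rw [← eps_sum, ← eps_sum]
    congr 1
    calc ∑ e : G.edgeSet, T e * dd G c e
        = ∑ e : G.edgeSet, ∑ w ∈ Finset.univ.filter (fun w => w ∈ (e : Sym2 V)), T e * c w := by
          refine Finset.sum_congr rfl fun e _ => ?_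
          obtain ⟨u, v, huv, hrep⟩ := edge_repr G e
          rw [dd_eq G hrep, hrep, filter_mem_sym2 huv.ne, Finset.sum_pair huv.ne]
          ring
      _ = ∑ v : V, ∑ e ∈ inc G v, T e * c v := (swap_add G _).symm
      _ = ∑ v : V, (∑ e ∈ inc G v, T e) * c v := by
          refine Finset.sum_congr rfl fun v _ => (Finset.sum_mul _ _ _).symm
  rw [Finset.sum_congr rfl (fun c _ => h1 c)]
  have h2 : ∑ c : V → K4, ∏ v : V, eps ((∑ e ∈ inc G v, T e) * c v)
      = ∏ v : V, ∑ y : K4, eps ((∑ e ∈ inc G v, T e) * y) := by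
    rw [Finset.prod_univ_sum, Fintype.piFinset_univ]
  rw [h2]
  have h3 : ∀ v : V, ∑ y : K4, eps ((∑ e ∈ inc G v, T e) * y)
      = if (∑ e ∈ inc G v, T e) = 0 then (4:ℂ) else 0 := by
    intro v
    rw [← sum_eps_mul]
    exact Finset.sum_congr rfl fun y _ => by rw [mul_comm]
  rw [Finset.prod_congr rfl (fun v _ => h3 v)]
  by_cases hf : IsFlow G T
  · rw [if_pos hf]
    rw [Finset.prod_congr rfl (fun v _ => if_pos (hf v)), Finset.prod_const,
      Finset.card_univ]
  · rw [if_neg hf]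
    obtain ⟨v, hv⟩ : ∃ v, ¬ (∑ e ∈ inc G v, T e) = 0 := by
      by_contra h
      push_neg at h
      exact hf h
    exact Finset.prod_eq_zero (Finset.mem_univ v) (if_neg hv)

lemma main_sum (hcubic : G.IsRegularOfDegree 3) :
    (2:ℂ) ^ Fintype.card G.edgeSet * ∑ c : V → K4, chi (∏ e : G.edgeSet, dd G c e)
      = (4:ℂ) ^ Fintype.card V *
          (Nat.card {T : G.edgeSet → K4 // IsFlow G T ∧ ∀ e, T e ≠ 0} : ℂ) := by
  classical
  calc (2:ℂ) ^ Fintype.card G.edgeSet * ∑ c : V → K4, chi (∏ e : G.edgeSet, dd G c e)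
      = ∑ c : V → K4, ∏ e : G.edgeSet, (2 * chi (dd G c e)) := by
        rw [Finset.mul_sum]
        refine Finset.sum_congr rfl fun c _ => ?_
        rw [chi_prod, Finset.prod_mul_distrib, Finset.prod_const, Finset.card_univ]
    _ = ∑ c : V → K4, ∏ e : G.edgeSet, ∑ t : K4, chi t ^ 2 * eps (t * dd G c e) := by
        exact Finset.sum_congr rfl fun c _ =>
          Finset.prod_congr rfl fun e _ => (gauss _).symm
    _ = ∑ c : V → K4, ∑ T : G.edgeSet → K4,
          ∏ e : G.edgeSet, chi (T e) ^ 2 * eps (T e * dd G c e) := by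
        refine Finset.sum_congr rfl fun c _ => ?_
        rw [Finset.prod_univ_sum, Fintype.piFinset_univ]
    _ = ∑ T : G.edgeSet → K4, (∏ e : G.edgeSet, chi (T e) ^ 2) *
          ∑ c : V → K4, ∏ e : G.edgeSet, eps (T e * dd G c e) := by
        rw [Finset.sum_comm]
        refine Finset.sum_congr rfl fun T _ => ?_
        rw [Finset.mul_sum]
        exact Finset.sum_congr rfl fun c _ => Finset.prod_mul_distrib
    _ = ∑ T : G.edgeSet → K4,
          (if IsFlow G T ∧ (∀ e, T e ≠ 0) then (4:ℂ) ^ Fintype.card V else 0) := by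
        refine Finset.sum_congr rfl fun T _ => ?_
        rw [inner_sum G T]
        by_cases hf : IsFlow G T
        · by_cases hnz : ∀ e, T e ≠ 0
          · rw [if_pos hf, if_pos ⟨hf, hnz⟩]
            have hone : ∏ e : G.edgeSet, chi (T e) ^ 2 = 1 := by
              rw [Finset.prod_pow, ← chi_prod, flow_prod_eq_one G hcubic hf hnz,
                chi_one, one_pow]
            rw [hone, one_mul]
          · rw [if_neg (show ¬(IsFlow G T ∧ ∀ e, T e ≠ 0) from fun h => hnz h.2)]
            push_neg at hnz
            obtain ⟨e, he⟩ := hnz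
            rw [Finset.prod_eq_zero (Finset.mem_univ e)
              (by rw [he, chi_zero]; ring), zero_mul]
        · rw [if_neg hf, mul_zero, if_neg (show ¬(IsFlow G T ∧ ∀ e, T e ≠ 0) from fun h => hf h.1)]
    _ = (4:ℂ) ^ Fintype.card V *
          (Nat.card {T : G.edgeSet → K4 // IsFlow G T ∧ ∀ e, T e ≠ 0} : ℂ) := by
        rw [Finset.sum_ite, Finset.sum_const_zero, add_zero, Finset.sum_const,
          nsmul_eq_mul, mul_comm]
        congr 1
        rw [Nat.card_eq_fintype_card, Fintype.card_subtype]

lemma frob_inj : Function.Injective (fun y : K4 => y * y) := by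
  intro y z h
  simp only at h
  have h2 : (y - z) ^ 2 = 0 := by linear_combination h + (z * z - y * z) * two_eq_zero
  have := pow_eq_zero_iff (two_ne_zero) |>.mp h2
  exact sub_eq_zero.mp this

lemma sum_frob_reindex (f : (V → K4) → ℂ) :
    ∑ c : V → K4, f (fun v => c v * c v) = ∑ c : V → K4, f c := by
  have hbij : Function.Bijective (fun (c : V → K4) => (fun v => c v * c v)) := by
    rw [← Finite.injective_iff_bijective]
    intro c c' h
    funext v
    exact frob_inj (congrFun h v)
  exact Fintype.sum_bijective _ hbij _ f (fun c => rfl)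

lemma dd_frob (c : V → K4) :
    dd G (fun v => c v * c v) = fun e => dd G c e * dd G c e := by
  funext e
  obtain ⟨u, v, _, hrep⟩ := edge_repr G e
  simp only [dd_eq G hrep]
  linear_combination (-(c u * c v)) * two_eq_zero

lemma main_sum2 (hcubic : G.IsRegularOfDegree 3) :
    (2:ℂ) ^ Fintype.card G.edgeSet *
        ∑ c : V → K4, (chi (∏ e : G.edgeSet, dd G c e)
          + chi ((∏ e : G.edgeSet, dd G c e) * (∏ e : G.edgeSet, dd G c e)))
      = 2 * ((4:ℂ) ^ Fintype.card V *
          (Nat.card {T : G.edgeSet → K4 // IsFlow G T ∧ ∀ e, T e ≠ 0} : ℂ)) := by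
  rw [Finset.sum_add_distrib]
  have hsq : ∑ c : V → K4, chi ((∏ e : G.edgeSet, dd G c e) * (∏ e : G.edgeSet, dd G c e))
      = ∑ c : V → K4, chi (∏ e : G.edgeSet, dd G c e) := by
    have := sum_frob_reindex (V := V) (fun c => chi (∏ e : G.edgeSet, dd G c e))
    calc ∑ c : V → K4, chi ((∏ e : G.edgeSet, dd G c e) * (∏ e : G.edgeSet, dd G c e))
        = ∑ c : V → K4, chi (∏ e : G.edgeSet, dd G (fun v => c v * c v) e) := by
          refine Finset.sum_congr rfl fun c _ => ?_
          rw [dd_frob]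
          congr 1
          rw [← Finset.prod_mul_distrib]
      _ = ∑ c : V → K4, chi (∏ e : G.edgeSet, dd G c e) := this
  rw [hsq]
  rw [← main_sum G hcubic]
  ring

end Graph3


section Pairs
open scoped Classical

variable {V : Type*} [Fintype V] [DecidableEq V] (G : SimpleGraph V) [DecidableRel G.Adj]

def p1 (y : K4) : Prop := y = 1 ∨ y = x + 1
def p2 (y : K4) : Prop := y = x ∨ y = x + 1

def pack (p q : Prop) [Decidable p] [Decidable q] : K4 :=
  (if p then (1:K4) else 0) + (if q then (1:K4) else 0) * x

lemma p1_zero : ¬ p1 0 := by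
  rintro (h | h)
  · exact one_ne_zero h.symm
  · exact x1_ne_zero h.symm
lemma p1_one : p1 1 := Or.inl rfl
lemma p1_x : ¬ p1 x := by
  rintro (h | h)
  · exact x_ne_one h
  · exact x1_ne_x h.symm
lemma p1_x1 : p1 (x + 1) := Or.inr rfl
lemma p2_zero : ¬ p2 0 := by
  rintro (h | h)
  · exact x_ne_zero h.symm
  · exact x1_ne_zero h.symm
lemma p2_one : ¬ p2 1 := by
  rintro (h | h)
  · exact x_ne_one h.symm
  · exact x1_ne_one h.symm
lemma p2_x : p2 x := Or.inl rfl
lemma p2_x1 : p2 (x + 1) := Or.inr rfl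

lemma pack_val_tt {p q : Prop} [Decidable p] [Decidable q] (hp : p) (hq : q) :
    pack p q = x + 1 := by rw [pack, if_pos hp, if_pos hq]; ring
lemma pack_val_tf {p q : Prop} [Decidable p] [Decidable q] (hp : p) (hq : ¬q) :
    pack p q = 1 := by rw [pack, if_pos hp, if_neg hq]; ring
lemma pack_val_ft {p q : Prop} [Decidable p] [Decidable q] (hp : ¬p) (hq : q) :
    pack p q = x := by rw [pack, if_neg hp, if_pos hq]; ring
lemma pack_val_ff {p q : Prop} [Decidable p] [Decidable q] (hp : ¬p) (hq : ¬q) :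
    pack p q = 0 := by rw [pack, if_neg hp, if_neg hq]; ring

lemma y_decomp (y : K4) : pack (p1 y) (p2 y) = y := by
  rcases K4_cases y with rfl | rfl | rfl | rfl
  · rw [pack_val_ff p1_zero p2_zero]
  · rw [pack_val_tf p1_one p2_one]
  · rw [pack_val_ft p1_x p2_x]
  · rw [pack_val_tt p1_x1 p2_x1]

lemma pack_p1 {p q : Prop} [Decidable p] [Decidable q] : p1 (pack p q) ↔ p := by
  by_cases hp : p <;> by_cases hq : q
  · rw [pack_val_tt hp hq]; exact iff_of_true p1_x1 hp
  · rw [pack_val_tf hp hq]; exact iff_of_true p1_one hp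
  · rw [pack_val_ft hp hq]; exact iff_of_false p1_x hp
  · rw [pack_val_ff hp hq]; exact iff_of_false p1_zero hp

lemma pack_p2 {p q : Prop} [Decidable p] [Decidable q] : p2 (pack p q) ↔ q := by
  by_cases hp : p <;> by_cases hq : q
  · rw [pack_val_tt hp hq]; exact iff_of_true p2_x1 hq
  · rw [pack_val_tf hp hq]; exact iff_of_false p2_one hq
  · rw [pack_val_ft hp hq]; exact iff_of_true p2_x hq
  · rw [pack_val_ff hp hq]; exact iff_of_false p2_zero hq

lemma pack_eq_zero {p q : Prop} [Decidable p] [Decidable q] :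
    pack p q = 0 ↔ ¬p ∧ ¬q := by
  by_cases hp : p <;> by_cases hq : q
  · rw [pack_val_tt hp hq]; exact iff_of_false x1_ne_zero (by tauto)
  · rw [pack_val_tf hp hq]; exact iff_of_false one_ne_zero (by tauto)
  · rw [pack_val_ft hp hq]; exact iff_of_false x_ne_zero (by tauto)
  · rw [pack_val_ff hp hq]; exact iff_of_true rfl ⟨hp, hq⟩

lemma eul_count (a : Finset (Sym2 V)) (ha : a ⊆ G.edgeFinset) (v : V) :
    Nat.card {e : Sym2 V // e ∈ a ∧ v ∈ e}
      = ((inc G v).filter (fun e : G.edgeSet => (e : Sym2 V) ∈ a)).card := by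
  have eqv : {e : Sym2 V // e ∈ a ∧ v ∈ e}
      ≃ {ed : G.edgeSet // ed ∈ (inc G v).filter (fun e : G.edgeSet => (e : Sym2 V) ∈ a)} :=
    { toFun := fun y =>
        ⟨⟨y.1, SimpleGraph.mem_edgeFinset.mp (ha y.2.1)⟩,
          Finset.mem_filter.mpr ⟨(mem_inc G).mpr y.2.2, y.2.1⟩⟩
      invFun := fun e =>
        ⟨e.1.1, (Finset.mem_filter.mp e.2).2,
          (mem_inc G).mp (Finset.mem_filter.mp e.2).1⟩
      left_inv := fun y => Subtype.ext rfl
      right_inv := fun e => Subtype.ext (Subtype.ext rfl) }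
  calc Nat.card {e : Sym2 V // e ∈ a ∧ v ∈ e}
      = Fintype.card {e : Sym2 V // e ∈ a ∧ v ∈ e} := Nat.card_eq_fintype_card
    _ = Fintype.card {ed : G.edgeSet // ed ∈ (inc G v).filter (fun e : G.edgeSet => (e : Sym2 V) ∈ a)} :=
        Fintype.card_congr eqv
    _ = ((inc G v).filter (fun e : G.edgeSet => (e : Sym2 V) ∈ a)).card := Fintype.card_coe _

lemma D_pack (P Q : G.edgeSet → Prop) [DecidablePred P] [DecidablePred Q] (v : V) :
    ∑ e ∈ inc G v, pack (P e) (Q e)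
      = (((inc G v).filter P).card : K4) + (((inc G v).filter Q).card : K4) * x := by
  unfold pack
  rw [Finset.sum_add_distrib, ← Finset.sum_mul, Finset.sum_boole, Finset.sum_boole]

lemma even_pair {m n : ℕ} : ((m : K4) + (n : K4) * x = 0) ↔ (Even m ∧ Even n) := by
  constructor
  · intro h
    rcases Nat.even_or_odd m with hm | hm <;> rcases Nat.even_or_odd n with hn | hn
    · exact ⟨hm, hn⟩
    · exfalso
      rw [cast_even hm, cast_not_even (Nat.not_even_iff_odd.mpr hn)] at h
      exact x_ne_zero (by linear_combination h)
    · exfalso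
      rw [cast_not_even (Nat.not_even_iff_odd.mpr hm), cast_even hn] at h
      exact one_ne_zero (by linear_combination h)
    · exfalso
      rw [cast_not_even (Nat.not_even_iff_odd.mpr hm),
        cast_not_even (Nat.not_even_iff_odd.mpr hn)] at h
      exact x1_ne_zero (by linear_combination h)
  · rintro ⟨hm, hn⟩
    rw [cast_even hm, cast_even hn]
    ring

def aT (T : G.edgeSet → K4) : Finset (Sym2 V) :=
  (Finset.univ.filter (fun e : G.edgeSet => p1 (T e))).map
    ⟨Subtype.val, Subtype.val_injective⟩

def bT (T : G.edgeSet → K4) : Finset (Sym2 V) :=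
  (Finset.univ.filter (fun e : G.edgeSet => p2 (T e))).map
    ⟨Subtype.val, Subtype.val_injective⟩

lemma aT_subset (T : G.edgeSet → K4) : aT G T ⊆ G.edgeFinset := by
  intro y hy
  obtain ⟨e, _, rfl⟩ := Finset.mem_map.mp hy
  exact SimpleGraph.mem_edgeFinset.mpr e.2

lemma bT_subset (T : G.edgeSet → K4) : bT G T ⊆ G.edgeFinset := by
  intro y hy
  obtain ⟨e, _, rfl⟩ := Finset.mem_map.mp hy
  exact SimpleGraph.mem_edgeFinset.mpr e.2

lemma mem_aT (T : G.edgeSet → K4) (e : G.edgeSet) :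
    (e : Sym2 V) ∈ aT G T ↔ p1 (T e) := by
  constructor
  · intro h
    obtain ⟨e', he', hval⟩ := Finset.mem_map.mp h
    have : e' = e := Subtype.ext hval
    subst this
    exact (Finset.mem_filter.mp he').2
  · intro h
    exact Finset.mem_map.mpr ⟨e, Finset.mem_filter.mpr ⟨Finset.mem_univ _, h⟩, rfl⟩

lemma mem_bT (T : G.edgeSet → K4) (e : G.edgeSet) :
    (e : Sym2 V) ∈ bT G T ↔ p2 (T e) := by
  constructor
  · intro h
    obtain ⟨e', he', hval⟩ := Finset.mem_map.mp h
    have : e' = e := Subtype.ext hval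
    subst this
    exact (Finset.mem_filter.mp he').2
  · intro h
    exact Finset.mem_map.mpr ⟨e, Finset.mem_filter.mpr ⟨Finset.mem_univ _, h⟩, rfl⟩

end Pairs

section Pairs2
open scoped Classical

variable {V : Type*} [Fintype V] [DecidableEq V] (G : SimpleGraph V) [DecidableRel G.Adj]

lemma pack_congr {p p' q q' : Prop} [Decidable p] [Decidable p'] [Decidable q] [Decidable q']
    (hp : p ↔ p') (hq : q ↔ q') : pack p q = pack p' q' := by
  by_cases hp' : p' <;> by_cases hq' : q'
  · rw [pack_val_tt (hp.mpr hp') (hq.mpr hq'), pack_val_tt hp' hq']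
  · rw [pack_val_tf (hp.mpr hp') (fun h => hq' (hq.mp h)), pack_val_tf hp' hq']
  · rw [pack_val_ft (fun h => hp' (hp.mp h)) (hq.mpr hq'), pack_val_ft hp' hq']
  · rw [pack_val_ff (fun h => hp' (hp.mp h)) (fun h => hq' (hq.mp h)), pack_val_ff hp' hq']

lemma wd_pair_to_flow (a b : Finset (Sym2 V)) (hEa : IsEul a) (hEb : IsEul b)
    (hu : a ∪ b = G.edgeFinset) :
    IsFlow G (fun e => pack ((e : Sym2 V) ∈ a) ((e : Sym2 V) ∈ b))
      ∧ ∀ e : G.edgeSet, pack ((e : Sym2 V) ∈ a) ((e : Sym2 V) ∈ b) ≠ 0 := by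
  have ha : a ⊆ G.edgeFinset := hu ▸ Finset.subset_union_left
  have hb : b ⊆ G.edgeFinset := hu ▸ Finset.subset_union_right
  constructor
  · intro v
    rw [D_pack]
    apply even_pair.mpr
    constructor
    · rw [← eul_count G a ha v]; exact hEa v
    · rw [← eul_count G b hb v]; exact hEb v
  · intro e h0
    obtain ⟨hna, hnb⟩ := pack_eq_zero.mp h0
    have hm : (e : Sym2 V) ∈ a ∪ b := by
      rw [hu]
      exact SimpleGraph.mem_edgeFinset.mpr e.2
    rcases Finset.mem_union.mp hm with h | h
    exacts [hna h, hnb h]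

lemma wd_flow_to_pair (T : G.edgeSet → K4) (hT : IsFlow G T) (hnz : ∀ e, T e ≠ 0) :
    IsEul (aT G T) ∧ IsEul (bT G T) ∧ aT G T ∪ bT G T = G.edgeFinset := by
  have hD : ∀ v : V, ((((inc G v).filter (fun e : G.edgeSet => p1 (T e))).card : K4)
      + (((inc G v).filter (fun e : G.edgeSet => p2 (T e))).card : K4) * x) = 0 := by
    intro v
    rw [← D_pack]
    rw [← hT v]
    exact Finset.sum_congr rfl fun e _ => y_decomp (T e)
  refine ⟨?_, ?_, ?_⟩
  · intro v
    rw [eul_count G _ (aT_subset G T) v]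
    have hfil : (inc G v).filter (fun e : G.edgeSet => (e : Sym2 V) ∈ aT G T)
        = (inc G v).filter (fun e : G.edgeSet => p1 (T e)) :=
      Finset.filter_congr (fun e _ => by rw [mem_aT])
    rw [hfil]
    exact (even_pair.mp (hD v)).1
  · intro v
    rw [eul_count G _ (bT_subset G T) v]
    have hfil : (inc G v).filter (fun e : G.edgeSet => (e : Sym2 V) ∈ bT G T)
        = (inc G v).filter (fun e : G.edgeSet => p2 (T e)) :=
      Finset.filter_congr (fun e _ => by rw [mem_bT])
    rw [hfil]
    exact (even_pair.mp (hD v)).2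
  · ext y
    constructor
    · intro hy
      rcases Finset.mem_union.mp hy with h | h
      exacts [aT_subset G T h, bT_subset G T h]
    · intro hy
      have he : y ∈ G.edgeSet := SimpleGraph.mem_edgeFinset.mp hy
      by_contra hcon
      rw [Finset.mem_union] at hcon
      push_neg at hcon
      have h1 : ¬ p1 (T ⟨y, he⟩) := fun h => hcon.1 ((mem_aT G T ⟨y, he⟩).mpr h)
      have h2 : ¬ p2 (T ⟨y, he⟩) := fun h => hcon.2 ((mem_bT G T ⟨y, he⟩).mpr h)
      exact hnz ⟨y, he⟩ ((y_decomp (T ⟨y, he⟩)).symm.trans (pack_val_ff h1 h2))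

lemma pairs_card :
    Nat.card {p : Finset (Sym2 V) × Finset (Sym2 V) //
        IsEul p.1 ∧ IsEul p.2 ∧ p.1 ∪ p.2 = G.edgeFinset}
      = Nat.card {T : G.edgeSet → K4 // IsFlow G T ∧ ∀ e, T e ≠ 0} := by
  apply Nat.card_congr
  refine
    { toFun := fun p =>
        ⟨fun e => pack ((e : Sym2 V) ∈ p.1.1) ((e : Sym2 V) ∈ p.1.2),
          (wd_pair_to_flow G p.1.1 p.1.2 p.2.1 p.2.2.1 p.2.2.2).1,
          (wd_pair_to_flow G p.1.1 p.1.2 p.2.1 p.2.2.1 p.2.2.2).2⟩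
      invFun := fun T =>
        ⟨(aT G T.1, bT G T.1),
          (wd_flow_to_pair G T.1 T.2.1 T.2.2).1,
          (wd_flow_to_pair G T.1 T.2.1 T.2.2).2.1,
          (wd_flow_to_pair G T.1 T.2.1 T.2.2).2.2⟩
      left_inv := ?_
      right_inv := ?_ }
  · rintro ⟨⟨a, b⟩, hEa, hEb, hu⟩
    have ha : a ⊆ G.edgeFinset := hu ▸ Finset.subset_union_left
    have hb : b ⊆ G.edgeFinset := hu ▸ Finset.subset_union_right
    apply Subtype.ext
    apply Prod.ext
    · ext y
      simp only
      constructor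
      · intro hy
        have he : y ∈ G.edgeSet :=
          SimpleGraph.mem_edgeFinset.mp (aT_subset G _ hy)
        have := (mem_aT G _ ⟨y, he⟩).mp hy
        exact pack_p1.mp this
      · intro hy
        have he : y ∈ G.edgeSet := SimpleGraph.mem_edgeFinset.mp (ha hy)
        exact (mem_aT G _ ⟨y, he⟩).mpr (pack_p1.mpr hy)
    · ext y
      simp only
      constructor
      · intro hy
        have he : y ∈ G.edgeSet :=
          SimpleGraph.mem_edgeFinset.mp (bT_subset G _ hy)
        have := (mem_bT G _ ⟨y, he⟩).mp hy
        exact pack_p2.mp this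
      · intro hy
        have he : y ∈ G.edgeSet := SimpleGraph.mem_edgeFinset.mp (hb hy)
        exact (mem_bT G _ ⟨y, he⟩).mpr (pack_p2.mpr hy)
  · rintro ⟨T, hT, hnz⟩
    apply Subtype.ext
    funext e
    exact (pack_congr (mem_aT G T e) (mem_bT G T e)).trans (y_decomp (T e))

end Pairs2

section Final
open scoped Classical

variable {V : Type*} [Fintype V] [DecidableEq V] (G : SimpleGraph V) [DecidableRel G.Adj]

lemma chi_w2 (y : K4) : chi y + chi (y * y)
    = 2 * (if y = 1 then (1:ℂ) else 0) - (if y ≠ 0 ∧ y ≠ 1 then (1:ℂ) else 0) := by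
  rw [chi_w]
  by_cases h0 : y = 0
  · subst h0
    rw [if_pos rfl, if_neg (zero_ne_one (α := K4)),
      if_neg (fun h => h.1 rfl)]
    ring
  · by_cases h1 : y = 1
    · subst h1
      rw [if_neg h0, if_pos rfl, if_pos rfl, if_neg (fun h => h.2 rfl)]
      ring
    · rw [if_neg h0, if_neg h1, if_neg h1, if_pos ⟨h0, h1⟩]
      ring

lemma sum_counts :
    ∑ c : V → K4, (chi (∏ e : G.edgeSet, dd G c e)
        + chi ((∏ e : G.edgeSet, dd G c e) * (∏ e : G.edgeSet, dd G c e)))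
      = 2 * (Nat.card {c : V → K4 // (∏ e : G.edgeSet, dd G c e) = 1} : ℂ)
        - (Nat.card {c : V → K4 //
            (∏ e : G.edgeSet, dd G c e) ≠ 0 ∧ (∏ e : G.edgeSet, dd G c e) ≠ 1} : ℂ) := by
  rw [Finset.sum_congr rfl (fun c _ => chi_w2 _)]
  rw [Finset.sum_sub_distrib, ← Finset.mul_sum, Finset.sum_boole, Finset.sum_boole]
  congr 2
  · rw [Nat.card_eq_fintype_card, Fintype.card_subtype]
  · rw [Nat.card_eq_fintype_card, Fintype.card_subtype]

theorem stmt_18' (hcubic : G.IsRegularOfDegree 3) :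
    (2 : ℚ) ^ ((2 * Fintype.card V : ℤ) - (G.edgeFinset.card : ℤ) -
        2 * (Nat.card G.ConnectedComponent : ℤ) + 1) *
      (Nat.card {p : Finset (Sym2 V) × Finset (Sym2 V) //
          IsEul p.1 ∧ IsEul p.2 ∧ p.1 ∪ p.2 = G.edgeFinset} : ℚ) =
    2 * (Nat.card {z : G.edgeSet → K4 //
          IsTension G z ∧ (∏ e : G.edgeSet, z e) = 1} : ℚ) -
      (Nat.card {z : G.edgeSet → K4 //
          IsTension G z ∧ (∏ e : G.edgeSet, z e) ≠ 0 ∧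
            (∏ e : G.edgeSet, z e) ≠ 1} : ℚ) := by
  set n := Fintype.card V with hn
  set m := G.edgeFinset.card with hm
  set k := Nat.card G.ConnectedComponent with hk
  set F := Nat.card {T : G.edgeSet → K4 // IsFlow G T ∧ ∀ e, T e ≠ 0} with hF
  set N1 := Nat.card {z : G.edgeSet → K4 //
      IsTension G z ∧ (∏ e : G.edgeSet, z e) = 1} with hN1
  set Nw := Nat.card {z : G.edgeSet → K4 //
      IsTension G z ∧ (∏ e : G.edgeSet, z e) ≠ 0 ∧
        (∏ e : G.edgeSet, z e) ≠ 1} with hNw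
  -- edge card
  have hmE : Fintype.card G.edgeSet = m := by
    rw [hm, SimpleGraph.edgeFinset, Set.toFinset_card]
  -- counting colourings through tensions
  have hA : Nat.card {c : V → K4 // (∏ e : G.edgeSet, dd G c e) = 1} = N1 * 4 ^ k := by
    have := tension_card G (fun z => (∏ e : G.edgeSet, z e) = 1)
    rw [ker_card] at this
    exact this
  have hB : Nat.card {c : V → K4 //
      (∏ e : G.edgeSet, dd G c e) ≠ 0 ∧ (∏ e : G.edgeSet, dd G c e) ≠ 1}
      = Nw * 4 ^ k := by
    have := tension_card G
      (fun z => (∏ e : G.edgeSet, z e) ≠ 0 ∧ (∏ e : G.edgeSet, z e) ≠ 1)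
    rw [ker_card] at this
    exact this
  -- the complex identity
  have hC : (2:ℂ) ^ m * (2 * ((N1 * 4 ^ k : ℕ) : ℂ) - ((Nw * 4 ^ k : ℕ) : ℂ))
      = 2 * ((4:ℂ) ^ n * (F : ℂ)) := by
    rw [← hA, ← hB, ← sum_counts G, ← hmE]
    exact main_sum2 G hcubic
  -- convert to a ℕ identity
  have h4C : (4:ℂ) ^ n = 2 ^ (2 * n) := by
    rw [show (4:ℂ) = 2 ^ 2 by norm_num, ← pow_mul]
  have hCC : ((2 ^ (m + 1) * (N1 * 4 ^ k) : ℕ) : ℂ)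
      = ((2 ^ (2 * n + 1) * F + 2 ^ m * (Nw * 4 ^ k) : ℕ) : ℂ) := by
    push_cast
    push_cast at hC
    linear_combination hC + 2 * (F : ℂ) * h4C
  have hNat : 2 ^ (m + 1) * (N1 * 4 ^ k) = 2 ^ (2 * n + 1) * F + 2 ^ m * (Nw * 4 ^ k) := by
    exact_mod_cast hCC
  -- pairs = flows
  have hP : (Nat.card {p : Finset (Sym2 V) × Finset (Sym2 V) //
      IsEul p.1 ∧ IsEul p.2 ∧ p.1 ∪ p.2 = G.edgeFinset}) = F := pairs_card G
  rw [hP]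
  -- final rational arithmetic
  have h2 : (2:ℚ) ≠ 0 := two_ne_zero
  have hzz : (2:ℚ) ^ ((2 * n : ℤ) - m - 2 * k + 1) * ((2:ℚ) ^ (m : ℤ) * (2:ℚ) ^ (2 * k : ℤ))
      = 2 ^ ((2 * n : ℤ) + 1) := by
    rw [← zpow_add₀ h2, ← zpow_add₀ h2]
    congr 1
    ring
  have hpos : ((2:ℚ) ^ (m : ℤ) * (2:ℚ) ^ (2 * k : ℤ)) ≠ 0 := by positivity
  apply mul_right_cancel₀ hpos
  -- recast hNat into ℚ
  have hQ : ((2:ℚ) ^ (m : ℤ) * (2:ℚ) ^ (2 * k : ℤ)) * (2 * (N1 : ℚ) - (Nw : ℚ))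
      = 2 ^ ((2 * n : ℤ) + 1) * (F : ℚ) := by
    have hq1 : (2:ℚ) ^ (m : ℤ) = 2 ^ m := by
      rw [zpow_natCast]
    have hq2 : (2:ℚ) ^ (2 * k : ℤ) = 4 ^ k := by
      rw [show ((2 * k : ℤ)) = ((2 * k : ℕ) : ℤ) by push_cast; ring, zpow_natCast,
        pow_mul]
      norm_num
    have hq3 : (2:ℚ) ^ ((2 * n : ℤ) + 1) = 2 ^ (2 * n + 1) := by
      rw [show ((2 * n : ℤ) + 1) = ((2 * n + 1 : ℕ) : ℤ) by push_cast; ring, zpow_natCast]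
    rw [hq1, hq2, hq3]
    have hcast : (2:ℚ) ^ (m + 1) * ((N1 : ℚ) * 4 ^ k)
        = 2 ^ (2 * n + 1) * (F : ℚ) + 2 ^ m * ((Nw : ℚ) * 4 ^ k) := by
      exact_mod_cast congrArg (fun t : ℕ => (t : ℚ)) hNat
    linear_combination hcast
  linear_combination (F : ℚ) * hzz - hQ

end Final

end Aux

/-- For a finite simple cubic graph `G`:
`2^{2|V| − |E| − 2k(G) + 1} F(G;4)
  = 2 #{𝔽₄-tensions z with ∏_e z(e) = 1} − #{𝔽₄-tensions z with ∏_e z(e) ∉ {0,1}}`. -/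
theorem stmt_18 {V : Type*} [Fintype V] [DecidableEq V] (G : SimpleGraph V)
    [DecidableRel G.Adj] (hcubic : G.IsRegularOfDegree 3) :
    (2 : ℚ) ^ ((2 * Fintype.card V : ℤ) - (G.edgeFinset.card : ℤ) -
        2 * (Nat.card G.ConnectedComponent : ℤ) + 1) *
      (Nat.card {p : Finset (Sym2 V) × Finset (Sym2 V) //
          IsEul p.1 ∧ IsEul p.2 ∧ p.1 ∪ p.2 = G.edgeFinset} : ℚ) =
    2 * (Nat.card {z : G.edgeSet → GaloisField 2 2 //
          IsTension G z ∧ (∏ e : G.edgeSet, z e) = 1} : ℚ) -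
      (Nat.card {z : G.edgeSet → GaloisField 2 2 //
          IsTension G z ∧ (∏ e : G.edgeSet, z e) ≠ 0 ∧
            (∏ e : G.edgeSet, z e) ≠ 1} : ℚ) :=
  Aux.stmt_18' G hcubic
end
end

section
/- Let G be a finite simple graph with vertex set V and edge set E that admits a cycle double cover by triangles. Then: (i) the number of ordered pairs (A,B) of eulerian subsets of E with A ∪ B = E and |A| ≡ |B| + 1 (mod 3) equals the number of such pairs with |A| ≡ |B| + 2 (mod 3); and (ii) 2^{2|V|} · (N₀ − N₁) = 2^{|E|} · P(G;4), where N₀ (respectively N₁) is the number of ordered pairs (A,B) of eulerian subsets of E with A ∪ B = E and |A| ≡ |B| (mod 3) (respectively |A| ≡ |B| + 1 (mod 3)). -/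
open Finset

noncomputable section
namespace S19

abbrev K : Type := ZMod 2 × ZMod 2

lemma K_add_eq_zero : ∀ a b : K, a + b = 0 ↔ a = b := by decide

lemma K_cases : ∀ x : K, x = 0 ∨ x = (1,0) ∨ x = (0,1) ∨ x = (1,1) := by decide

def ω : ℂ := Complex.exp (2 * Real.pi * Complex.I / 3)

lemma hω : IsPrimitiveRoot ω 3 := by
  have h := Complex.isPrimitiveRoot_exp 3 (by norm_num)
  have : ω = Complex.exp (2 * Real.pi * Complex.I / 3) := rfl
  rw [show (2 * Real.pi * Complex.I / 3 : ℂ) = 2 * Real.pi * Complex.I / (3:ℕ) by norm_num] at this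
  rwa [this]

lemma hω3 : ω ^ 3 = 1 := hω.pow_eq_one

lemma hωsum : ω ^ 2 + ω + 1 = 0 := by
  have h1 : ω ≠ 1 := hω.ne_one (by norm_num)
  have h : (ω - 1) * (ω ^ 2 + ω + 1) = 0 := by linear_combination hω3
  rcases mul_eq_zero.1 h with h | h
  · exact absurd (by linear_combination h) h1
  · exact h

end S19
noncomputable section
namespace S19
open Finset

def sgn : ZMod 2 → ℂ := fun t => if t = 0 then 1 else -1

lemma zmod2_cases : ∀ t : ZMod 2, t = 0 ∨ t = 1 := by decide

lemma sgn_add (s t : ZMod 2) : sgn (s + t) = sgn s * sgn t := by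
  rcases zmod2_cases s with h | h <;> rcases zmod2_cases t with h' | h' <;>
    subst h <;> subst h' <;>
    simp [sgn, show (1 + 1 : ZMod 2) = 0 from by decide,
      show ((1:ZMod 2) ≠ 0) from by decide] <;> norm_num

def χ (a x : K) : ℂ := sgn (a.1 * x.1 + a.2 * x.2)

lemma χ_add_right (a x y : K) : χ a (x + y) = χ a x * χ a y := by
  unfold χ
  rw [← sgn_add]
  congr 1
  show a.1 * (x.1 + y.1) + a.2 * (x.2 + y.2) = _
  ring

lemma χ_add_left (a b x : K) : χ (a + b) x = χ a x * χ b x := by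
  unfold χ
  rw [← sgn_add]
  congr 1
  show (a.1 + b.1) * x.1 + (a.2 + b.2) * x.2 = _
  ring

lemma χ_zero_left (x : K) : χ 0 x = 1 := by
  simp [χ, sgn]

lemma χ_sum_left {γ : Type*} (s : Finset γ) (g : γ → K) (y : K) :
    χ (∑ i ∈ s, g i) y = ∏ i ∈ s, χ (g i) y := by
  induction s using Finset.cons_induction with
  | empty => simp [χ_zero_left]
  | cons a s ha ih => rw [Finset.sum_cons, Finset.prod_cons, χ_add_left, ih]

lemma sumK (f : K → ℂ) : ∑ x : K, f x = f (0,0) + f (1,0) + f (0,1) + f (1,1) := by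
  rw [show (univ : Finset K) = {(0,0),(1,0),(0,1),(1,1)} from by decide]
  rw [Finset.sum_insert (by decide), Finset.sum_insert (by decide),
    Finset.sum_insert (by decide), Finset.sum_singleton]
  ring

lemma sum_χ (a : K) : ∑ x : K, χ a x = if a = 0 then 4 else 0 := by
  rcases K_cases a with h | h | h | h <;> subst h <;> rw [sumK] <;>
    norm_num [χ, sgn, show ((1:ZMod 2) ≠ 0) from by decide,
      show (1 + 1 : ZMod 2) = 0 from by decide, show ((2:ZMod 2)) = 0 from by decide]
  rw [if_pos (show (2:ZMod 2) = 0 from by decide)]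
  ring

def w : K → ℂ := fun x => if x = 0 then 0 else ω ^ (x.1.val + 2 * x.2.val)

def kk : K → ℂ := fun a => if a = 0 then 0 else 2 * ω ^ (2 * a.1.val + a.2.val)

lemma wFourier (x : K) : w x = (1/4) * ∑ a : K, kk a * χ a x := by
  rcases K_cases x with h | h | h | h <;> subst h <;> rw [sumK] <;>
    norm_num [w, kk, χ, sgn, show ((1:ZMod 2) ≠ 0) from by decide,
      show (1 + 1 : ZMod 2) = 0 from by decide, show ((1,0) : K) ≠ 0 from by decide,
      show ((0,1) : K) ≠ 0 from by decide, show ((1,1) : K) ≠ 0 from by decide,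
      show ((1:ZMod 2)).val = 1 from rfl, show ((0:ZMod 2)).val = 0 from rfl,
      show ((2:ZMod 2)) = 0 from by decide, show ((2:ZMod 2)).val = 0 from by decide]
  · linear_combination 2 * hω3 + 2 * hωsum
  · linear_combination (1/2) * hω3 + (1/2) * hωsum
  · linear_combination (1/2) * hω3 + (1/2) * hωsum
  · rw [if_pos (show (2:ZMod 2) = 0 from by decide)]
    linear_combination (1/2) * hω3 + (1/2) * hωsum

lemma tri (x y : K) (hx : x ≠ 0) (hy : y ≠ 0) (hxy : x + y ≠ 0) :
    w x * w y * w (x + y) = 1 := by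
  rcases K_cases x with h | h | h | h <;> rcases K_cases y with h' | h' | h' | h' <;>
    subst h <;> subst h' <;> first
  | exact absurd rfl hx
  | exact absurd rfl hy
  | exact absurd (by decide) hxy
  | (norm_num [w, show ((1,0) : K) ≠ 0 from by decide,
      show ((0,1) : K) ≠ 0 from by decide, show ((1,1) : K) ≠ 0 from by decide,
      show ((1,0) + (0,1) : K) = (1,1) from by decide,
      show ((1,0) + (1,1) : K) = (0,1) from by decide,
      show ((0,1) + (1,0) : K) = (1,1) from by decide,
      show ((0,1) + (1,1) : K) = (1,0) from by decide,
      show ((1,1) + (1,0) : K) = (0,1) from by decide,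
      show ((1,1) + (0,1) : K) = (1,0) from by decide,
      show ((1,0) + 1 : K) = (0,1) from by decide,
      show ((0,1) + 1 : K) = (1,0) from by decide,
      show (1 + (1,0) : K) = (0,1) from by decide,
      show (1 + (0,1) : K) = (1,0) from by decide,
      show ((1:ZMod 2)).val = 1 from rfl, show ((0:ZMod 2)).val = 0 from rfl,
      show ((2:ZMod 2)) = 0 from by decide, show ((2:ZMod 2)).val = 0 from by decide]
     <;> linear_combination (ω^3 + 1) * hω3)

lemma mprod {α β : Type*} [DecidableEq α] (E : Finset α) (T : Multiset β) (g : α → β → ℂ) :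
    (T.map (fun t => ∏ e ∈ E, g e t)).prod = ∏ e ∈ E, (T.map (g e)).prod := by
  induction T using Multiset.induction with
  | empty => simp
  | cons a T ih => simp [ih, Finset.prod_mul_distrib]

lemma mpow {β : Type*} (T : Multiset β) (x : ℂ) (g : β → ℕ) :
    (T.map fun t => x ^ g t).prod = x ^ (T.map g).sum := by
  induction T using Multiset.induction with
  | empty => simp
  | cons a T ih => simp [ih, pow_add]

end S19
section Graph
open Finset
namespace S19

variable {V : Type*} [Fintype V] [DecidableEq V] {G : SimpleGraph V} [DecidableRel G.Adj]

def dc (c : V → K) : Sym2 V → K := Sym2.lift ⟨fun u v => c u + c v, fun u v => add_comm _ _⟩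

lemma dc_mk (c : V → K) (u v : V) : dc c s(u, v) = c u + c v := rfl

lemma edge_rep {e : Sym2 V} (he : e ∈ G.edgeFinset) :
    ∃ u v, G.Adj u v ∧ e = s(u, v) := by
  induction e with
  | _ u v => exact ⟨u, v, by simpa [SimpleGraph.mem_edgeFinset] using he, rfl⟩

lemma w_cube {x : K} (hx : x ≠ 0) : w x ^ 3 = 1 := by
  unfold w
  rw [if_neg hx, ← pow_mul, mul_comm, pow_mul, hω3, one_pow]

lemma Kself (a : K) : a + a = 0 := by rw [K_add_eq_zero]

lemma tri_prod (c : V → K) (hc : ∀ u v, G.Adj u v → c u ≠ c v)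
    {t : Finset (Sym2 V)} (ht : ∃ u v x : V, G.Adj u v ∧ G.Adj v x ∧ G.Adj u x ∧
      t = {s(u, v), s(v, x), s(u, x)}) :
    ∏ e ∈ t, w (dc c e) = 1 := by
  obtain ⟨u, v, x, huv, hvx, hux, rfl⟩ := ht
  have h1 : s(u,v) ≠ s(v,x) := by
    intro h
    rw [Sym2.eq_iff] at h
    rcases h with ⟨ha, hb⟩ | ⟨ha, hb⟩
    · exact G.ne_of_adj huv ha
    · exact G.ne_of_adj hux ha
  have h2 : s(u,v) ≠ s(u,x) := by
    intro h
    rw [Sym2.eq_iff] at h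
    rcases h with ⟨ha, hb⟩ | ⟨ha, hb⟩
    · exact G.ne_of_adj hvx hb
    · exact G.ne_of_adj hux ha
  have h3 : s(v,x) ≠ s(u,x) := by
    intro h
    rw [Sym2.eq_iff] at h
    rcases h with ⟨ha, hb⟩ | ⟨ha, hb⟩
    · exact G.ne_of_adj huv ha.symm
    · exact G.ne_of_adj hvx ha
  rw [show ({s(u, v), s(v, x), s(u, x)} : Finset (Sym2 V))
      = insert s(u,v) (insert s(v,x) {s(u,x)}) from rfl]
  rw [Finset.prod_insert (by simp [h1, h2]), Finset.prod_insert (by simp [h3]),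
    Finset.prod_singleton, dc_mk, dc_mk, dc_mk]
  have hsum : c u + c x = (c u + c v) + (c v + c x) := by
    have := Kself (c v)
    calc c u + c x = c u + (c v + c v) + c x := by rw [this]; ring
    _ = (c u + c v) + (c v + c x) := by ring
  rw [hsum, ← mul_assoc]
  refine tri _ _ ?_ ?_ ?_
  · rw [Ne, K_add_eq_zero]; exact hc u v huv
  · rw [Ne, K_add_eq_zero]; exact hc v x hvx
  · rw [← hsum, Ne, K_add_eq_zero]; exact hc u x hux

lemma colorsum
    (hcdc : ∃ T : Multiset (Finset (Sym2 V)),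
      (∀ t ∈ T, ∃ u v w : V, G.Adj u v ∧ G.Adj v w ∧ G.Adj u w ∧
        t = {s(u, v), s(v, w), s(u, w)}) ∧
      ∀ e ∈ G.edgeFinset, (T.map (fun t => if e ∈ t then (1 : ℕ) else 0)).sum = 2) :
    (∑ c : V → K, ∏ e ∈ G.edgeFinset, w (dc c e))
      = ((univ.filter (fun c : V → K => ∀ u v, G.Adj u v → c u ≠ c v)).card : ℂ) := by
  classical
  have key : ∀ c : V → K, ∏ e ∈ G.edgeFinset, w (dc c e)
      = if (∀ u v, G.Adj u v → c u ≠ c v) then 1 else 0 := by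
    intro c
    by_cases hc : ∀ u v, G.Adj u v → c u ≠ c v
    · rw [if_pos hc]
      set z := ∏ e ∈ G.edgeFinset, w (dc c e) with hz
      have hdcne : ∀ e ∈ G.edgeFinset, dc c e ≠ 0 := by
        intro e he
        obtain ⟨u, v, huv, rfl⟩ := edge_rep he
        rw [dc_mk, Ne, K_add_eq_zero]
        exact hc u v huv
      have h3 : z ^ 3 = 1 := by
        rw [hz, ← Finset.prod_pow]
        rw [Finset.prod_congr rfl (fun e he => w_cube (hdcne e he))]
        exact Finset.prod_const_one
      have h2 : z ^ 2 = 1 := by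
        obtain ⟨T, hT1, hT2⟩ := hcdc
        have step : z ^ 2 = (T.map fun t => ∏ e ∈ G.edgeFinset,
            w (dc c e) ^ (if e ∈ t then 1 else 0)).prod := by
          rw [hz, ← Finset.prod_pow, mprod]
          refine Finset.prod_congr rfl fun e he => ?_
          rw [mpow, hT2 e he]
        have hone : ∀ t ∈ T, (∏ e ∈ G.edgeFinset,
            w (dc c e) ^ (if e ∈ t then 1 else 0)) = (fun _ => (1:ℂ)) t := by
          intro t ht
          obtain ⟨u, v, x, huv, hvx, hux, htt⟩ := hT1 t ht
          have htE : t ⊆ G.edgeFinset := by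
            subst htt
            intro e he
            simp only [Finset.mem_insert, Finset.mem_singleton] at he
            rcases he with rfl | rfl | rfl <;>
              simp [SimpleGraph.mem_edgeFinset, huv, hvx, hux]
          have : ∀ e ∈ G.edgeFinset, w (dc c e) ^ (if e ∈ t then 1 else 0)
              = if e ∈ t then w (dc c e) else 1 := by
            intro e he
            split_ifs <;> simp
          rw [Finset.prod_congr rfl this, Finset.prod_ite_mem,
            Finset.inter_eq_right.2 htE]
          exact tri_prod c hc ⟨u, v, x, huv, hvx, hux, htt⟩
        rw [step, Multiset.map_congr rfl hone]
        simp
      have hzne : z = 1 := by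
        have : z * z ^ 2 = z ^ 3 := by ring
        rw [h2, h3, mul_one] at this
        exact this
      exact hzne
    · rw [if_neg hc]
      push_neg at hc
      obtain ⟨u, v, huv, heq⟩ := hc
      refine Finset.prod_eq_zero (i := s(u,v)) (by simp [SimpleGraph.mem_edgeFinset, huv]) ?_
      rw [dc_mk, (K_add_eq_zero _ _).2 heq]
      simp [w]
  rw [Finset.sum_congr rfl (fun c _ => key c), Finset.sum_boole]

end S19
end Graph
section Graph2
open Finset
namespace S19

variable {V : Type*} [Fintype V] [DecidableEq V] {G : SimpleGraph V} [DecidableRel G.Adj]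

lemma hedge (a : K) (c : V → K) (x : {e : Sym2 V // e ∈ G.edgeFinset}) :
    χ a (dc c ↑x) = ∏ z : V, if z ∈ (x : Sym2 V) then χ a (c z) else 1 := by
  obtain ⟨u, v, huv, he⟩ := edge_rep x.2
  rw [he, dc_mk, χ_add_right, ← Finset.prod_filter]
  have hf : univ.filter (fun z => z ∈ s(u,v)) = {u, v} := by
    ext z; simp [Sym2.mem_iff]
  rw [hf, Finset.prod_pair (G.ne_of_adj huv)]

lemma step2 :
    (∑ c : V → K, ∏ e ∈ G.edgeFinset, w (dc c e))
      = (1/4 : ℂ) ^ G.edgeFinset.card *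
        ∑ α : {e : Sym2 V // e ∈ G.edgeFinset} → K,
          (∏ x : {e : Sym2 V // e ∈ G.edgeFinset}, kk (α x)) *
            (if ∀ z : V, (∑ x ∈ univ.filter
                (fun x : {e : Sym2 V // e ∈ G.edgeFinset} => z ∈ (x : Sym2 V)), α x) = 0
              then (4:ℂ) ^ Fintype.card V else 0) := by
  classical
  have hc1 : ∀ c : V → K, ∏ e ∈ G.edgeFinset, w (dc c e)
      = (1/4:ℂ) ^ G.edgeFinset.card *
        ∑ α : {e : Sym2 V // e ∈ G.edgeFinset} → K,
          ∏ x : {e : Sym2 V // e ∈ G.edgeFinset}, (kk (α x) * χ (α x) (dc c ↑x)) := by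
    intro c
    calc ∏ e ∈ G.edgeFinset, w (dc c e)
        = ∏ x : {e : Sym2 V // e ∈ G.edgeFinset}, w (dc c ↑x) := by
          rw [Finset.univ_eq_attach]; exact (Finset.prod_attach _ _).symm
      _ = ∏ x : {e : Sym2 V // e ∈ G.edgeFinset},
            ((1/4:ℂ) * ∑ a : K, kk a * χ a (dc c ↑x)) :=
          Finset.prod_congr rfl fun x _ => wFourier _
      _ = (1/4:ℂ) ^ G.edgeFinset.card *
            ∏ x : {e : Sym2 V // e ∈ G.edgeFinset}, ∑ a : K, kk a * χ a (dc c ↑x) := by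
          rw [Finset.prod_mul_distrib, Finset.prod_const, Finset.card_univ, Fintype.card_coe]
      _ = (1/4:ℂ) ^ G.edgeFinset.card *
          ∑ α : {e : Sym2 V // e ∈ G.edgeFinset} → K,
            ∏ x : {e : Sym2 V // e ∈ G.edgeFinset}, (kk (α x) * χ (α x) (dc c ↑x)) := by
          rw [Finset.prod_univ_sum, Fintype.piFinset_univ]
  have hc2 : ∀ α : {e : Sym2 V // e ∈ G.edgeFinset} → K,
      ∑ c : V → K, ∏ x : {e : Sym2 V // e ∈ G.edgeFinset}, χ (α x) (dc c ↑x)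
        = if ∀ z : V, (∑ x ∈ univ.filter
              (fun x : {e : Sym2 V // e ∈ G.edgeFinset} => z ∈ (x : Sym2 V)), α x) = 0
            then (4:ℂ) ^ Fintype.card V else 0 := by
    intro α
    set σ : V → K := fun z => ∑ x ∈ univ.filter
        (fun x : {e : Sym2 V // e ∈ G.edgeFinset} => z ∈ (x : Sym2 V)), α x with hσ
    have hsplit : ∀ c : V → K,
        ∏ x : {e : Sym2 V // e ∈ G.edgeFinset}, χ (α x) (dc c ↑x)
          = ∏ z : V, χ (σ z) (c z) := by
      intro c
      calc ∏ x : {e : Sym2 V // e ∈ G.edgeFinset}, χ (α x) (dc c ↑x)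
          = ∏ x : {e : Sym2 V // e ∈ G.edgeFinset},
              ∏ z : V, (if z ∈ (x : Sym2 V) then χ (α x) (c z) else 1) :=
            Finset.prod_congr rfl fun x _ => hedge _ _ _
        _ = ∏ z : V, ∏ x : {e : Sym2 V // e ∈ G.edgeFinset},
              (if z ∈ (x : Sym2 V) then χ (α x) (c z) else 1) := Finset.prod_comm
        _ = ∏ z : V, χ (σ z) (c z) := by
            refine Finset.prod_congr rfl fun z _ => ?_
            rw [← Finset.prod_filter, ← χ_sum_left]
    rw [Finset.sum_congr rfl fun c _ => hsplit c]
    rw [show (univ : Finset (V → K)) = Fintype.piFinset (fun _ => univ) from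
      (Fintype.piFinset_univ).symm]
    rw [← Finset.prod_univ_sum]
    by_cases hz : ∀ z : V, σ z = 0
    · rw [if_pos hz]
      calc ∏ z : V, ∑ y : K, χ (σ z) y = ∏ z : V, (4:ℂ) := by
            refine Finset.prod_congr rfl fun z _ => ?_
            rw [sum_χ, if_pos (hz z)]
        _ = (4:ℂ) ^ Fintype.card V := by rw [Finset.prod_const, Finset.card_univ]
    · rw [if_neg hz]
      push_neg at hz
      obtain ⟨z, hz⟩ := hz
      refine Finset.prod_eq_zero (Finset.mem_univ z) ?_
      rw [sum_χ, if_neg hz]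
  calc ∑ c : V → K, ∏ e ∈ G.edgeFinset, w (dc c e)
      = ∑ c : V → K, ((1/4:ℂ) ^ G.edgeFinset.card *
          ∑ α : {e : Sym2 V // e ∈ G.edgeFinset} → K,
            ∏ x : {e : Sym2 V // e ∈ G.edgeFinset}, (kk (α x) * χ (α x) (dc c ↑x))) :=
        Finset.sum_congr rfl fun c _ => hc1 c
    _ = (1/4:ℂ) ^ G.edgeFinset.card * ∑ c : V → K,
          ∑ α : {e : Sym2 V // e ∈ G.edgeFinset} → K,
            ∏ x : {e : Sym2 V // e ∈ G.edgeFinset}, (kk (α x) * χ (α x) (dc c ↑x)) := by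
        rw [Finset.mul_sum]
    _ = (1/4:ℂ) ^ G.edgeFinset.card * ∑ α : {e : Sym2 V // e ∈ G.edgeFinset} → K,
          ∑ c : V → K,
            ∏ x : {e : Sym2 V // e ∈ G.edgeFinset}, (kk (α x) * χ (α x) (dc c ↑x)) := by
        rw [Finset.sum_comm]
    _ = (1/4:ℂ) ^ G.edgeFinset.card * ∑ α : {e : Sym2 V // e ∈ G.edgeFinset} → K,
          (∏ x : {e : Sym2 V // e ∈ G.edgeFinset}, kk (α x)) *
            (if ∀ z : V, (∑ x ∈ univ.filter
                (fun x : {e : Sym2 V // e ∈ G.edgeFinset} => z ∈ (x : Sym2 V)), α x) = 0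
              then (4:ℂ) ^ Fintype.card V else 0) := by
        congr 1
        refine Finset.sum_congr rfl fun α _ => ?_
        rw [← hc2 α, Finset.mul_sum]
        exact Finset.sum_congr rfl fun c _ => Finset.prod_mul_distrib

end S19
end Graph2
section Graph3
open Finset
namespace S19

variable {V : Type*} [DecidableEq V]

/-- indicator pair function associated to a pair of edge sets -/
def e2 (E : Finset (Sym2 V)) (p : Finset (Sym2 V) × Finset (Sym2 V))
    (x : {e : Sym2 V // e ∈ E}) : K :=
  ((if (x : Sym2 V) ∈ p.1 then 1 else 0), (if (x : Sym2 V) ∈ p.2 then 1 else 0))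

variable [Fintype V]

lemma step3 (E : Finset (Sym2 V)) (F : ({e : Sym2 V // e ∈ E} → K) → ℂ) :
    ∑ α : {e : Sym2 V // e ∈ E} → K, F α
      = ∑ p ∈ (univ : Finset (Finset (Sym2 V) × Finset (Sym2 V))).filter
            (fun p => p.1 ⊆ E ∧ p.2 ⊆ E),
          F (e2 E p) := by
  classical
  set toPair : ({e : Sym2 V // e ∈ E} → K) → Finset (Sym2 V) × Finset (Sym2 V) :=
    fun α => ((univ.filter fun x => (α x).1 = 1).image Subtype.val,
      (univ.filter fun x => (α x).2 = 1).image Subtype.val) with htoPair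
  have hleft : ∀ α, e2 E (toPair α) = α := by
    intro α
    funext x
    have hm1 : ((x : Sym2 V) ∈ (univ.filter fun y : {e : Sym2 V // e ∈ E} =>
        (α y).1 = 1).image Subtype.val) ↔ (α x).1 = 1 := by
      simp only [Finset.mem_image, Finset.mem_filter, Finset.mem_univ, true_and]
      constructor
      · rintro ⟨y, hy, hyx⟩
        rwa [show y = x from Subtype.ext hyx] at hy
      · intro h; exact ⟨x, h, rfl⟩
    have hm2 : ((x : Sym2 V) ∈ (univ.filter fun y : {e : Sym2 V // e ∈ E} =>
        (α y).2 = 1).image Subtype.val) ↔ (α x).2 = 1 := by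
      simp only [Finset.mem_image, Finset.mem_filter, Finset.mem_univ, true_and]
      constructor
      · rintro ⟨y, hy, hyx⟩
        rwa [show y = x from Subtype.ext hyx] at hy
      · intro h; exact ⟨x, h, rfl⟩
    have c1 : (e2 E (toPair α) x).1 = (α x).1 := by
      show (if (x : Sym2 V) ∈ _ then (1:ZMod 2) else 0) = _
      rcases zmod2_cases (α x).1 with h | h
      · rw [if_neg, h]
        rw [hm1, h]
        exact fun hc => absurd hc.symm (by decide)
      · rw [if_pos (hm1.2 h), h]
    have c2 : (e2 E (toPair α) x).2 = (α x).2 := by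
      show (if (x : Sym2 V) ∈ _ then (1:ZMod 2) else 0) = _
      rcases zmod2_cases (α x).2 with h | h
      · rw [if_neg, h]
        rw [hm2, h]
        exact fun hc => absurd hc.symm (by decide)
      · rw [if_pos (hm2.2 h), h]
    exact Prod.ext c1 c2
  refine (Finset.sum_nbij' (e2 E) toPair (fun _ _ => Finset.mem_univ _) ?_ ?_
    (fun α _ => hleft α) (fun _ _ => rfl)).symm
  · -- toPair α lands in the filter
    intro α _
    simp only [Finset.mem_filter, Finset.mem_univ, true_and, htoPair]
    constructor <;> intro e he <;>
      simp only [Finset.mem_image, Finset.mem_filter, Finset.mem_univ, true_and] at he <;>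
      obtain ⟨x, _, rfl⟩ := he <;> exact x.2
  · -- right inverse on the filter
    rintro ⟨p1, p2⟩ hp
    simp only [Finset.mem_filter, Finset.mem_univ, true_and] at hp
    obtain ⟨hp1, hp2⟩ := hp
    have comp1 : ((univ.filter fun x : {e : Sym2 V // e ∈ E} =>
        (e2 E (p1, p2) x).1 = 1).image Subtype.val) = p1 := by
      ext e
      simp only [Finset.mem_image, Finset.mem_filter, Finset.mem_univ, true_and]
      constructor
      · rintro ⟨x, hx, rfl⟩
        by_contra h
        rw [show (e2 E (p1, p2) x).1 = (if (x : Sym2 V) ∈ p1 then 1 else 0) from rfl,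
          if_neg h] at hx
        exact absurd hx (by decide)
      · intro he
        refine ⟨⟨e, hp1 he⟩, ?_, rfl⟩
        rw [show (e2 E (p1, p2) ⟨e, hp1 he⟩).1 = (if e ∈ p1 then 1 else 0) from rfl,
          if_pos he]
    have comp2 : ((univ.filter fun x : {e : Sym2 V // e ∈ E} =>
        (e2 E (p1, p2) x).2 = 1).image Subtype.val) = p2 := by
      ext e
      simp only [Finset.mem_image, Finset.mem_filter, Finset.mem_univ, true_and]
      constructor
      · rintro ⟨x, hx, rfl⟩
        by_contra h
        rw [show (e2 E (p1, p2) x).2 = (if (x : Sym2 V) ∈ p2 then 1 else 0) from rfl,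
          if_neg h] at hx
        exact absurd hx (by decide)
      · intro he
        refine ⟨⟨e, hp2 he⟩, ?_, rfl⟩
        rw [show (e2 E (p1, p2) ⟨e, hp2 he⟩).2 = (if e ∈ p2 then 1 else 0) from rfl,
          if_pos he]
    exact Prod.ext comp1 comp2

end S19
end Graph3
section Graph4
open Finset
namespace S19

variable {V : Type*} [Fintype V] [DecidableEq V] {G : SimpleGraph V} [DecidableRel G.Adj]

lemma indic_card (q : Finset (Sym2 V)) (hq : q ⊆ G.edgeFinset) :
    (∑ x : {e : Sym2 V // e ∈ G.edgeFinset}, if (x : Sym2 V) ∈ q then 1 else 0) = q.card := by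
  classical
  rw [Finset.univ_eq_attach, Finset.sum_attach G.edgeFinset (fun e => if e ∈ q then 1 else 0),
    ← Finset.card_filter, Finset.filter_mem_eq_inter, Finset.inter_eq_right.2 hq]

lemma kkprod (p : Finset (Sym2 V) × Finset (Sym2 V)) (hp1 : p.1 ⊆ G.edgeFinset)
    (hp2 : p.2 ⊆ G.edgeFinset) :
    (∏ x : {e : Sym2 V // e ∈ G.edgeFinset}, kk (e2 G.edgeFinset p x))
      = if p.1 ∪ p.2 = G.edgeFinset then
          (2:ℂ) ^ G.edgeFinset.card * ω ^ (2 * p.1.card + p.2.card) else 0 := by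
  classical
  by_cases hu : p.1 ∪ p.2 = G.edgeFinset
  · rw [if_pos hu]
    have hne : ∀ x : {e : Sym2 V // e ∈ G.edgeFinset}, e2 G.edgeFinset p x ≠ 0 := by
      intro x h0
      have hx : (↑x : Sym2 V) ∈ p.1 ∪ p.2 := by rw [hu]; exact x.2
      rw [Finset.mem_union] at hx
      have h1 := congrArg Prod.fst h0
      have h2 := congrArg Prod.snd h0
      rcases hx with hx | hx
      · rw [show (e2 G.edgeFinset p x).1 = (if (x : Sym2 V) ∈ p.1 then 1 else 0) from rfl,
          if_pos hx] at h1
        exact absurd h1 (by decide)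
      · rw [show (e2 G.edgeFinset p x).2 = (if (x : Sym2 V) ∈ p.2 then 1 else 0) from rfl,
          if_pos hx] at h2
        exact absurd h2 (by decide)
    have hval : ∀ x : {e : Sym2 V // e ∈ G.edgeFinset}, kk (e2 G.edgeFinset p x)
        = 2 * ω ^ (2 * (if (x : Sym2 V) ∈ p.1 then 1 else 0)
            + (if (x : Sym2 V) ∈ p.2 then 1 else 0)) := by
      intro x
      unfold kk
      rw [if_neg (hne x)]
      by_cases m1 : (x : Sym2 V) ∈ p.1 <;> by_cases m2 : (x : Sym2 V) ∈ p.2 <;>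
        simp [e2, m1, m2, show ((1:ZMod 2)).val = 1 from rfl, show ((0:ZMod 2)).val = 0 from rfl]
    rw [Finset.prod_congr rfl (fun x _ => hval x), Finset.prod_mul_distrib,
      Finset.prod_const, Finset.card_univ, Fintype.card_coe, Finset.prod_pow_eq_pow_sum]
    congr 1
    rw [Finset.sum_add_distrib, ← Finset.mul_sum, indic_card p.1 hp1, indic_card p.2 hp2]
  · rw [if_neg hu]
    have hex : ∃ e ∈ G.edgeFinset, e ∉ p.1 ∪ p.2 := by
      by_contra h
      push_neg at h
      exact hu (Finset.Subset.antisymm (Finset.union_subset hp1 hp2) h)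
    obtain ⟨e, heE, hun⟩ := hex
    refine Finset.prod_eq_zero (Finset.mem_univ (⟨e, heE⟩ : {e : Sym2 V // e ∈ G.edgeFinset})) ?_
    rw [Finset.mem_union] at hun
    push_neg at hun
    have : e2 G.edgeFinset p ⟨e, heE⟩ = 0 := by
      unfold e2
      rw [if_neg hun.1, if_neg hun.2]
      rfl
    rw [this]
    simp [kk]

lemma comp_sum (q : Finset (Sym2 V)) (hq : q ⊆ G.edgeFinset) (z : V) :
    (∑ x ∈ univ.filter (fun x : {e : Sym2 V // e ∈ G.edgeFinset} => z ∈ (x : Sym2 V)),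
        (if (x : Sym2 V) ∈ q then (1 : ZMod 2) else 0)) = 0
      ↔ Even (Nat.card {e : Sym2 V // e ∈ q ∧ z ∈ e}) := by
  classical
  have h1 : (∑ x ∈ univ.filter (fun x : {e : Sym2 V // e ∈ G.edgeFinset} => z ∈ (x : Sym2 V)),
        (if (x : Sym2 V) ∈ q then (1 : ZMod 2) else 0))
      = ∑ x : {e : Sym2 V // e ∈ G.edgeFinset},
          (if (x : Sym2 V) ∈ q ∧ z ∈ (x : Sym2 V) then (1 : ZMod 2) else 0) := by
    rw [Finset.sum_filter]
    refine Finset.sum_congr rfl fun x _ => ?_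
    by_cases hz : z ∈ (x : Sym2 V) <;> by_cases hx : (x : Sym2 V) ∈ q <;> simp [hz, hx]
  have h2 : (∑ x : {e : Sym2 V // e ∈ G.edgeFinset},
        (if (x : Sym2 V) ∈ q ∧ z ∈ (x : Sym2 V) then (1 : ZMod 2) else 0))
      = ∑ e : Sym2 V, (if e ∈ q ∧ z ∈ e then (1 : ZMod 2) else 0) := by
    rw [Finset.univ_eq_attach,
      Finset.sum_attach G.edgeFinset (fun e => if e ∈ q ∧ z ∈ e then (1 : ZMod 2) else 0)]
    refine Finset.sum_subset (Finset.subset_univ _) fun e _ he => ?_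
    rw [if_neg]
    exact fun hc => he (hq hc.1)
  have h3 : (∑ e : Sym2 V, (if e ∈ q ∧ z ∈ e then (1 : ZMod 2) else 0))
      = (((univ : Finset (Sym2 V)).filter (fun e => e ∈ q ∧ z ∈ e)).card : ZMod 2) := by
    rw [Finset.card_filter]
    push_cast
    rfl
  rw [h1, h2, h3]
  rw [ZMod.natCast_eq_zero_iff, ← even_iff_two_dvd]
  rw [Nat.card_eq_fintype_card, Fintype.card_subtype]

lemma eulcond (p : Finset (Sym2 V) × Finset (Sym2 V)) (hp1 : p.1 ⊆ G.edgeFinset)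
    (hp2 : p.2 ⊆ G.edgeFinset) :
    (∀ z : V, (∑ x ∈ univ.filter
        (fun x : {e : Sym2 V // e ∈ G.edgeFinset} => z ∈ (x : Sym2 V)),
          e2 G.edgeFinset p x) = 0)
      ↔ (IsEul p.1 ∧ IsEul p.2) := by
  classical
  have hz : ∀ z : V, ((∑ x ∈ univ.filter
      (fun x : {e : Sym2 V // e ∈ G.edgeFinset} => z ∈ (x : Sym2 V)),
        e2 G.edgeFinset p x) = 0)
      ↔ (Even (Nat.card {e : Sym2 V // e ∈ p.1 ∧ z ∈ e})
          ∧ Even (Nat.card {e : Sym2 V // e ∈ p.2 ∧ z ∈ e})) := by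
    intro z
    rw [show (0 : K) = ((0 : ZMod 2), (0 : ZMod 2)) from rfl, Prod.ext_iff]
    have c1 : (∑ x ∈ univ.filter
        (fun x : {e : Sym2 V // e ∈ G.edgeFinset} => z ∈ (x : Sym2 V)),
          e2 G.edgeFinset p x).1
        = ∑ x ∈ univ.filter
            (fun x : {e : Sym2 V // e ∈ G.edgeFinset} => z ∈ (x : Sym2 V)),
            (if (x : Sym2 V) ∈ p.1 then (1 : ZMod 2) else 0) :=
      map_sum (AddMonoidHom.fst (ZMod 2) (ZMod 2)) _ _
    have c2 : (∑ x ∈ univ.filter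
        (fun x : {e : Sym2 V // e ∈ G.edgeFinset} => z ∈ (x : Sym2 V)),
          e2 G.edgeFinset p x).2
        = ∑ x ∈ univ.filter
            (fun x : {e : Sym2 V // e ∈ G.edgeFinset} => z ∈ (x : Sym2 V)),
            (if (x : Sym2 V) ∈ p.2 then (1 : ZMod 2) else 0) :=
      map_sum (AddMonoidHom.snd (ZMod 2) (ZMod 2)) _ _
    rw [c1, c2, comp_sum p.1 hp1 z, comp_sum p.2 hp2 z]
  constructor
  · intro h
    constructor
    · intro z; exact ((hz z).1 (h z)).1
    · intro z; exact ((hz z).1 (h z)).2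
  · intro h z
    exact (hz z).2 ⟨h.1 z, h.2 z⟩

end S19
end Graph4
section Graph5
open Finset
namespace S19

lemma ωpow_mod (nn : ℕ) : ω ^ nn = ω ^ (nn % 3) := by
  conv_lhs => rw [← Nat.div_add_mod nn 3]
  rw [pow_add, pow_mul, hω3, one_pow, one_mul]

lemma sum_omega_pow {β : Type*} [DecidableEq β] (Q : Finset β) (r : β → ℕ)
    (hr : ∀ p ∈ Q, r p < 3) :
    ∑ p ∈ Q, ω ^ (r p) = ((Q.filter (fun p => r p = 0)).card : ℂ)
      + ω * ((Q.filter (fun p => r p = 1)).card : ℂ)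
      + ω^2 * ((Q.filter (fun p => r p = 2)).card : ℂ) := by
  classical
  rw [← Finset.sum_filter_add_sum_filter_not Q (fun p => r p = 0)]
  rw [← Finset.sum_filter_add_sum_filter_not (Q.filter (fun p => ¬ r p = 0))
    (fun p => r p = 1)]
  have hA : ∑ p ∈ Q.filter (fun p => r p = 0), ω ^ r p
      = ((Q.filter (fun p => r p = 0)).card : ℂ) := by
    rw [Finset.sum_congr rfl (fun p hp => by
      rw [(Finset.mem_filter.1 hp).2, pow_zero])]
    rw [Finset.sum_const, nsmul_eq_mul, mul_one]
  have e1 : (Q.filter (fun p => ¬ r p = 0)).filter (fun p => r p = 1)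
      = Q.filter (fun p => r p = 1) := by
    rw [Finset.filter_filter]
    exact Finset.filter_congr (fun p _ => by constructor <;> intro h <;> omega)
  have e2 : (Q.filter (fun p => ¬ r p = 0)).filter (fun p => ¬ r p = 1)
      = Q.filter (fun p => r p = 2) := by
    rw [Finset.filter_filter]
    refine Finset.filter_congr (fun p hp => ?_)
    have := hr p hp
    constructor <;> intro h <;> omega
  have hB : ∑ p ∈ (Q.filter (fun p => ¬ r p = 0)).filter (fun p => r p = 1), ω ^ r p
      = ω * ((Q.filter (fun p => r p = 1)).card : ℂ) := by
    rw [e1]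
    rw [Finset.sum_congr rfl (fun p hp => by
      rw [(Finset.mem_filter.1 hp).2, pow_one])]
    rw [Finset.sum_const, nsmul_eq_mul, mul_comm]
  have hC : ∑ p ∈ (Q.filter (fun p => ¬ r p = 0)).filter (fun p => ¬ r p = 1), ω ^ r p
      = ω^2 * ((Q.filter (fun p => r p = 2)).card : ℂ) := by
    rw [e2]
    rw [Finset.sum_congr rfl (fun p hp => by
      rw [(Finset.mem_filter.1 hp).2])]
    rw [Finset.sum_const, nsmul_eq_mul, mul_comm]
  rw [hA, hB, hC]
  ring

variable {V : Type*} [Fintype V] [DecidableEq V] {G : SimpleGraph V} [DecidableRel G.Adj]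

lemma ncard_eq (q : Finset (Sym2 V) × Finset (Sym2 V) → Prop) [DecidablePred q] :
    Nat.card {p : Finset (Sym2 V) × Finset (Sym2 V) // q p}
      = ((univ : Finset (Finset (Sym2 V) × Finset (Sym2 V))).filter q).card := by
  rw [Nat.card_eq_fintype_card, Fintype.card_subtype]

lemma part_i :
    Nat.card {p : Finset (Sym2 V) × Finset (Sym2 V) //
        IsEul p.1 ∧ IsEul p.2 ∧ p.1 ∪ p.2 = G.edgeFinset ∧
          p.1.card % 3 = (p.2.card + 1) % 3} =
      Nat.card {p : Finset (Sym2 V) × Finset (Sym2 V) //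
        IsEul p.1 ∧ IsEul p.2 ∧ p.1 ∪ p.2 = G.edgeFinset ∧
          p.1.card % 3 = (p.2.card + 2) % 3} := by
  apply Nat.card_congr
  refine ⟨fun x => ⟨(x.1.2, x.1.1), x.2.2.1, x.2.1, ?_, ?_⟩,
          fun x => ⟨(x.1.2, x.1.1), x.2.2.1, x.2.1, ?_, ?_⟩,
          fun x => Subtype.ext (Prod.ext rfl rfl),
          fun x => Subtype.ext (Prod.ext rfl rfl)⟩
  · show x.1.2 ∪ x.1.1 = G.edgeFinset
    rw [Finset.union_comm]; exact x.2.2.2.1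
  · show x.1.2.card % 3 = (x.1.1.card + 2) % 3
    have := x.2.2.2.2; omega
  · show x.1.2 ∪ x.1.1 = G.edgeFinset
    rw [Finset.union_comm]; exact x.2.2.2.1
  · show x.1.2.card % 3 = (x.1.1.card + 1) % 3
    have := x.2.2.2.2; omega

lemma color_eq :
    (Nat.card {c : V → Fin 4 // ∀ u v : V, G.Adj u v → c u ≠ c v} : ℕ)
      = ((univ : Finset (V → K)).filter (fun c => ∀ u v, G.Adj u v → c u ≠ c v)).card := by
  classical
  have φ : Fin 4 ≃ K := Fintype.equivOfCardEq (by rfl)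
  have h : Nat.card {c : V → Fin 4 // ∀ u v : V, G.Adj u v → c u ≠ c v}
      = Nat.card {c : V → K // ∀ u v : V, G.Adj u v → c u ≠ c v} := by
    apply Nat.card_congr
    refine Equiv.subtypeEquiv (Equiv.arrowCongr (Equiv.refl V) φ) (fun c => ?_)
    refine forall₂_congr fun u v => imp_congr_right fun _ => ?_
    simp only [Equiv.arrowCongr_apply, Equiv.coe_refl, Function.comp]
    exact (φ.injective.ne_iff).symm
  rw [h, Nat.card_eq_fintype_card, Fintype.card_subtype]

end S19
end Graph5
section Main
open Finset S19


/- Suppose `G` has a cycle double cover by triangles.  Then (i) the number of ordered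
pairs `(A,B)` of eulerian subsets of `E` with `A ∪ B = E` and `|A| ≡ |B| + 1 (mod 3)`
equals the number with `|A| ≡ |B| + 2 (mod 3)`; and (ii)
`2^{2|V|} (N₀ − N₁) = 2^{|E|} P(G;4)` where `N₀`, `N₁` count such pairs with
`|A| ≡ |B| (mod 3)` resp. `|A| ≡ |B| + 1 (mod 3)`. -/
theorem stmt_19 {V : Type*} [Fintype V] [DecidableEq V] (G : SimpleGraph V)
    [DecidableRel G.Adj]
    (hcdc : ∃ T : Multiset (Finset (Sym2 V)),
      (∀ t ∈ T, ∃ u v w : V, G.Adj u v ∧ G.Adj v w ∧ G.Adj u w ∧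
        t = {s(u, v), s(v, w), s(u, w)}) ∧
      ∀ e ∈ G.edgeFinset, (T.map (fun t => if e ∈ t then (1 : ℕ) else 0)).sum = 2) :
    (Nat.card {p : Finset (Sym2 V) × Finset (Sym2 V) //
        IsEul p.1 ∧ IsEul p.2 ∧ p.1 ∪ p.2 = G.edgeFinset ∧
          p.1.card % 3 = (p.2.card + 1) % 3} =
      Nat.card {p : Finset (Sym2 V) × Finset (Sym2 V) //
        IsEul p.1 ∧ IsEul p.2 ∧ p.1 ∪ p.2 = G.edgeFinset ∧
          p.1.card % 3 = (p.2.card + 2) % 3}) ∧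
    2 ^ (2 * Fintype.card V) *
        ((Nat.card {p : Finset (Sym2 V) × Finset (Sym2 V) //
            IsEul p.1 ∧ IsEul p.2 ∧ p.1 ∪ p.2 = G.edgeFinset ∧
              p.1.card % 3 = p.2.card % 3} : ℤ) -
          (Nat.card {p : Finset (Sym2 V) × Finset (Sym2 V) //
            IsEul p.1 ∧ IsEul p.2 ∧ p.1 ∪ p.2 = G.edgeFinset ∧
              p.1.card % 3 = (p.2.card + 1) % 3} : ℤ)) =
      2 ^ G.edgeFinset.card *
        (Nat.card {c : V → Fin 4 // ∀ u v : V, G.Adj u v → c u ≠ c v} : ℤ) := by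
  classical
  refine ⟨S19.part_i, ?_⟩
  have h1 := S19.colorsum (G := G) hcdc
  have h2 := S19.step2 (G := G)
  have h3 := S19.step3 G.edgeFinset (fun α =>
    (∏ x : {e : Sym2 V // e ∈ G.edgeFinset}, kk (α x)) *
      (if ∀ z : V, (∑ x ∈ univ.filter
          (fun x : {e : Sym2 V // e ∈ G.edgeFinset} => z ∈ (x : Sym2 V)), α x) = 0
        then (4:ℂ) ^ Fintype.card V else 0))
  have h4 : ∀ p ∈ (univ : Finset (Finset (Sym2 V) × Finset (Sym2 V))).filter
      (fun p => p.1 ⊆ G.edgeFinset ∧ p.2 ⊆ G.edgeFinset),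
      (∏ x : {e : Sym2 V // e ∈ G.edgeFinset}, kk (e2 G.edgeFinset p x)) *
        (if ∀ z : V, (∑ x ∈ univ.filter
            (fun x : {e : Sym2 V // e ∈ G.edgeFinset} => z ∈ (x : Sym2 V)),
              e2 G.edgeFinset p x) = 0
          then (4:ℂ) ^ Fintype.card V else 0)
      = if IsEul p.1 ∧ IsEul p.2 ∧ p.1 ∪ p.2 = G.edgeFinset then
          (2:ℂ) ^ G.edgeFinset.card * ((4:ℂ) ^ Fintype.card V *
            ω ^ ((2 * p.1.card + p.2.card) % 3)) else 0 := by
    intro p hp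
    obtain ⟨hp1, hp2⟩ := (Finset.mem_filter.1 hp).2
    rw [kkprod p hp1 hp2]
    by_cases hu : p.1 ∪ p.2 = G.edgeFinset
    · rw [if_pos hu]
      by_cases hE : IsEul p.1 ∧ IsEul p.2
      · rw [if_pos ((eulcond p hp1 hp2).2 hE), if_pos ⟨hE.1, hE.2, hu⟩, ← ωpow_mod]
        ring
      · rw [if_neg (fun hall => hE ((eulcond p hp1 hp2).1 hall)), mul_zero,
          if_neg (fun hc => hE ⟨hc.1, hc.2.1⟩)]
    · rw [if_neg hu, zero_mul, if_neg (fun hc => hu hc.2.2)]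
  have h5 : (∑ p ∈ (univ : Finset (Finset (Sym2 V) × Finset (Sym2 V))).filter
        (fun p => p.1 ⊆ G.edgeFinset ∧ p.2 ⊆ G.edgeFinset),
        (if IsEul p.1 ∧ IsEul p.2 ∧ p.1 ∪ p.2 = G.edgeFinset then
          (2:ℂ) ^ G.edgeFinset.card * ((4:ℂ) ^ Fintype.card V *
            ω ^ ((2 * p.1.card + p.2.card) % 3)) else 0))
      = ∑ p ∈ (univ : Finset (Finset (Sym2 V) × Finset (Sym2 V))).filter
          (fun p => IsEul p.1 ∧ IsEul p.2 ∧ p.1 ∪ p.2 = G.edgeFinset),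
          (2:ℂ) ^ G.edgeFinset.card * ((4:ℂ) ^ Fintype.card V *
            ω ^ ((2 * p.1.card + p.2.card) % 3)) := by
    rw [← Finset.sum_filter]
    congr 1
    rw [Finset.filter_filter]
    refine Finset.filter_congr (fun p _ => ?_)
    constructor
    · exact fun h => h.2
    · intro h
      refine ⟨⟨?_, ?_⟩, h⟩
      · rw [← h.2.2]; exact Finset.subset_union_left
      · rw [← h.2.2]; exact Finset.subset_union_right
  have h7 := S19.sum_omega_pow
    ((univ : Finset (Finset (Sym2 V) × Finset (Sym2 V))).filter
      (fun p => IsEul p.1 ∧ IsEul p.2 ∧ p.1 ∪ p.2 = G.edgeFinset))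
    (fun p => (2 * p.1.card + p.2.card) % 3)
    (fun p _ => Nat.mod_lt _ (by norm_num))
  have hc0 : ((univ : Finset (Finset (Sym2 V) × Finset (Sym2 V))).filter
        (fun p => IsEul p.1 ∧ IsEul p.2 ∧ p.1 ∪ p.2 = G.edgeFinset)).filter
        (fun p => (2 * p.1.card + p.2.card) % 3 = 0)
      = (univ : Finset (Finset (Sym2 V) × Finset (Sym2 V))).filter
          (fun p => IsEul p.1 ∧ IsEul p.2 ∧ p.1 ∪ p.2 = G.edgeFinset ∧
            p.1.card % 3 = p.2.card % 3) := by
    rw [Finset.filter_filter]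
    refine Finset.filter_congr (fun p _ => ?_)
    constructor
    · rintro ⟨⟨a, b, c⟩, d⟩
      refine ⟨a, b, c, ?_⟩
      omega
    · rintro ⟨a, b, c, d⟩
      refine ⟨⟨a, b, c⟩, ?_⟩
      omega
  have hc1 : ((univ : Finset (Finset (Sym2 V) × Finset (Sym2 V))).filter
        (fun p => IsEul p.1 ∧ IsEul p.2 ∧ p.1 ∪ p.2 = G.edgeFinset)).filter
        (fun p => (2 * p.1.card + p.2.card) % 3 = 1)
      = (univ : Finset (Finset (Sym2 V) × Finset (Sym2 V))).filter
          (fun p => IsEul p.1 ∧ IsEul p.2 ∧ p.1 ∪ p.2 = G.edgeFinset ∧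
            p.1.card % 3 = (p.2.card + 2) % 3) := by
    rw [Finset.filter_filter]
    refine Finset.filter_congr (fun p _ => ?_)
    constructor
    · rintro ⟨⟨a, b, c⟩, d⟩
      refine ⟨a, b, c, ?_⟩
      omega
    · rintro ⟨a, b, c, d⟩
      refine ⟨⟨a, b, c⟩, ?_⟩
      omega
  have hc2 : ((univ : Finset (Finset (Sym2 V) × Finset (Sym2 V))).filter
        (fun p => IsEul p.1 ∧ IsEul p.2 ∧ p.1 ∪ p.2 = G.edgeFinset)).filter
        (fun p => (2 * p.1.card + p.2.card) % 3 = 2)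
      = (univ : Finset (Finset (Sym2 V) × Finset (Sym2 V))).filter
          (fun p => IsEul p.1 ∧ IsEul p.2 ∧ p.1 ∪ p.2 = G.edgeFinset ∧
            p.1.card % 3 = (p.2.card + 1) % 3) := by
    rw [Finset.filter_filter]
    refine Finset.filter_congr (fun p _ => ?_)
    constructor
    · rintro ⟨⟨a, b, c⟩, d⟩
      refine ⟨a, b, c, ?_⟩
      omega
    · rintro ⟨a, b, c, d⟩
      refine ⟨⟨a, b, c⟩, ?_⟩
      omega
  rw [hc0, hc1, hc2, ← S19.ncard_eq, ← S19.ncard_eq, ← S19.ncard_eq] at h7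
  have hswap : Nat.card {p : Finset (Sym2 V) × Finset (Sym2 V) //
      IsEul p.1 ∧ IsEul p.2 ∧ p.1 ∪ p.2 = G.edgeFinset ∧
        p.1.card % 3 = (p.2.card + 2) % 3}
      = Nat.card {p : Finset (Sym2 V) × Finset (Sym2 V) //
      IsEul p.1 ∧ IsEul p.2 ∧ p.1 ∪ p.2 = G.edgeFinset ∧
        p.1.card % 3 = (p.2.card + 1) % 3} := S19.part_i.symm
  rw [hswap] at h7
  have hbig : ((Nat.card {c : V → Fin 4 // ∀ u v : V, G.Adj u v → c u ≠ c v} : ℕ) : ℂ)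
      = (1/4:ℂ) ^ G.edgeFinset.card * ((2:ℂ) ^ G.edgeFinset.card *
          ((4:ℂ) ^ Fintype.card V *
          (((Nat.card {p : Finset (Sym2 V) × Finset (Sym2 V) //
              IsEul p.1 ∧ IsEul p.2 ∧ p.1 ∪ p.2 = G.edgeFinset ∧
                p.1.card % 3 = p.2.card % 3} : ℕ) : ℂ)
            + ω * ((Nat.card {p : Finset (Sym2 V) × Finset (Sym2 V) //
              IsEul p.1 ∧ IsEul p.2 ∧ p.1 ∪ p.2 = G.edgeFinset ∧
                p.1.card % 3 = (p.2.card + 1) % 3} : ℕ) : ℂ)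
            + ω^2 * ((Nat.card {p : Finset (Sym2 V) × Finset (Sym2 V) //
              IsEul p.1 ∧ IsEul p.2 ∧ p.1 ∪ p.2 = G.edgeFinset ∧
                p.1.card % 3 = (p.2.card + 1) % 3} : ℕ) : ℂ)))) := by
    calc ((Nat.card {c : V → Fin 4 // ∀ u v : V, G.Adj u v → c u ≠ c v} : ℕ) : ℂ)
        = ((univ.filter (fun c : V → K => ∀ u v, G.Adj u v → c u ≠ c v)).card : ℂ) := by
          rw [S19.color_eq]
      _ = ∑ c : V → K, ∏ e ∈ G.edgeFinset, w (dc c e) := h1.symm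
      _ = (1/4 : ℂ) ^ G.edgeFinset.card *
          ∑ α : {e : Sym2 V // e ∈ G.edgeFinset} → K,
            (∏ x : {e : Sym2 V // e ∈ G.edgeFinset}, kk (α x)) *
              (if ∀ z : V, (∑ x ∈ univ.filter
                  (fun x : {e : Sym2 V // e ∈ G.edgeFinset} => z ∈ (x : Sym2 V)), α x) = 0
                then (4:ℂ) ^ Fintype.card V else 0) := h2
      _ = (1/4 : ℂ) ^ G.edgeFinset.card *
          ∑ p ∈ (univ : Finset (Finset (Sym2 V) × Finset (Sym2 V))).filter
            (fun p => p.1 ⊆ G.edgeFinset ∧ p.2 ⊆ G.edgeFinset),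
            (∏ x : {e : Sym2 V // e ∈ G.edgeFinset}, kk (e2 G.edgeFinset p x)) *
              (if ∀ z : V, (∑ x ∈ univ.filter
                  (fun x : {e : Sym2 V // e ∈ G.edgeFinset} => z ∈ (x : Sym2 V)),
                    e2 G.edgeFinset p x) = 0
                then (4:ℂ) ^ Fintype.card V else 0) := by rw [h3]
      _ = (1/4 : ℂ) ^ G.edgeFinset.card *
          ∑ p ∈ (univ : Finset (Finset (Sym2 V) × Finset (Sym2 V))).filter
            (fun p => p.1 ⊆ G.edgeFinset ∧ p.2 ⊆ G.edgeFinset),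
            (if IsEul p.1 ∧ IsEul p.2 ∧ p.1 ∪ p.2 = G.edgeFinset then
              (2:ℂ) ^ G.edgeFinset.card * ((4:ℂ) ^ Fintype.card V *
                ω ^ ((2 * p.1.card + p.2.card) % 3)) else 0) := by
          rw [Finset.sum_congr rfl h4]
      _ = (1/4 : ℂ) ^ G.edgeFinset.card *
          ∑ p ∈ (univ : Finset (Finset (Sym2 V) × Finset (Sym2 V))).filter
            (fun p => IsEul p.1 ∧ IsEul p.2 ∧ p.1 ∪ p.2 = G.edgeFinset),
            (2:ℂ) ^ G.edgeFinset.card * ((4:ℂ) ^ Fintype.card V *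
              ω ^ ((2 * p.1.card + p.2.card) % 3)) := by rw [h5]
      _ = (1/4 : ℂ) ^ G.edgeFinset.card * ((2:ℂ) ^ G.edgeFinset.card *
            ((4:ℂ) ^ Fintype.card V *
            ∑ p ∈ (univ : Finset (Finset (Sym2 V) × Finset (Sym2 V))).filter
              (fun p => IsEul p.1 ∧ IsEul p.2 ∧ p.1 ∪ p.2 = G.edgeFinset),
              ω ^ ((2 * p.1.card + p.2.card) % 3))) := by
          rw [← Finset.mul_sum]
          congr 1
          rw [← Finset.mul_sum]
      _ = _ := by rw [h7]
  have h2ne : ((2:ℂ) ^ G.edgeFinset.card) ≠ 0 := pow_ne_zero _ two_ne_zero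
  have hkey : (2:ℂ) ^ G.edgeFinset.card * ((2:ℂ) ^ G.edgeFinset.card *
      ((Nat.card {c : V → Fin 4 // ∀ u v : V, G.Adj u v → c u ≠ c v} : ℕ) : ℂ))
      = (2:ℂ) ^ G.edgeFinset.card * ((2:ℂ) ^ (2 * Fintype.card V) *
          (((Nat.card {p : Finset (Sym2 V) × Finset (Sym2 V) //
              IsEul p.1 ∧ IsEul p.2 ∧ p.1 ∪ p.2 = G.edgeFinset ∧
                p.1.card % 3 = p.2.card % 3} : ℕ) : ℂ)
            - ((Nat.card {p : Finset (Sym2 V) × Finset (Sym2 V) //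
              IsEul p.1 ∧ IsEul p.2 ∧ p.1 ∪ p.2 = G.edgeFinset ∧
                p.1.card % 3 = (p.2.card + 1) % 3} : ℕ) : ℂ))) := by
    have e4 : ((1:ℂ)/4) ^ G.edgeFinset.card
        = ((2:ℂ) ^ G.edgeFinset.card * (2:ℂ) ^ G.edgeFinset.card)⁻¹ := by
      rw [← mul_pow, div_pow, one_pow]
      norm_num
    have e2n : (2:ℂ) ^ (2 * Fintype.card V) = (4:ℂ) ^ Fintype.card V := by
      rw [pow_mul]; norm_num
    rw [hbig, e4, e2n]
    set t := (2:ℂ) ^ G.edgeFinset.card with ht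
    set u := (4:ℂ) ^ Fintype.card V with hu
    set A := ((Nat.card {p : Finset (Sym2 V) × Finset (Sym2 V) //
        IsEul p.1 ∧ IsEul p.2 ∧ p.1 ∪ p.2 = G.edgeFinset ∧
          p.1.card % 3 = p.2.card % 3} : ℕ) : ℂ) with hA
    set B := ((Nat.card {p : Finset (Sym2 V) × Finset (Sym2 V) //
        IsEul p.1 ∧ IsEul p.2 ∧ p.1 ∪ p.2 = G.edgeFinset ∧
          p.1.card % 3 = (p.2.card + 1) % 3} : ℕ) : ℂ) with hB
    have hinv : t * t * (t * t)⁻¹ = 1 := mul_inv_cancel₀ (mul_ne_zero h2ne h2ne)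
    linear_combination (t * (u * (A + ω*B + ω^2*B))) * hinv + (t*u*B) * hωsum
  have hfin := (mul_left_cancel₀ h2ne hkey).symm
  exact_mod_cast hfin
end Main
end
end
end
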